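/- arXiv:2203.07096 — 8 statements merged into one kernel-verified Lean document; each statement's English description precedes it below -/
import Mathlib

section
/- Let D ≥ 1 and c ≥ 2 be fixed, and let c₀ > 0 be a constant. For all sufficiently large n the following holds. Let l > 0, let t be a real number with ln n ≤ t, and let R₁, …, R_m be Borel subsets of the cube C = [0,l]^D with m ≤ n^c, such that (i) every R_i has Lebesgue measure at least 4c·l^D·t/n, and (ii) for all i ≠ j the Lebesgue measure of R_i ∩ R_j is at most c₀·l^D/(n·2^{√(log₂ n)}). Then there exists a set S of n points in C such that |S ∩ R_i| ≥ t for every i, and |S ∩ R_i ∩ R_j| ≤ 3c·√(log₂ n) for all i ≠ j. -/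
/-!
Sample `n` independent uniform points of the cube. A range of relative volume `p ≥ 4ct/n`
receives at most `⌊t⌋` of them with probability at most `2^t e^{-np/2} ≤ 2^t e^{-2ct}`,
obtained by summing the binomial terms `p^k (1-p)^(n-k) ≤ 2^t (p/2)^k (1-p)^(n-k)` over
`k ≤ t`. A pairwise intersection, of relative volume `q ≤ c₀ / (n 2^s)` with `s = √(log₂ n)`,
receives `K > 3cs` of them with probability at most
`(nq)^K ≤ (c₀ 2^{-s})^{3cs} = c₀^{3cs} n^{-3c}`. As `m ≤ n^c`, the union bound over the `m`
ranges and `m²` pairs leaves a failure probability below `1`; since the points are almost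
surely distinct, some sample is the required set.
-/

open MeasureTheory Set Filter ProbabilityTheory

theorem sum_pow_mul_pow_of_card_le_le {ι : Type*} [Fintype ι] (a : ℕ) {p : ℝ}
    (hp₀ : 0 ≤ p) (hp₁ : p ≤ 1) :
    ∑ T ∈ Finset.univ.filter (fun T : Finset ι => T.card ≤ a),
        p ^ T.card * (1 - p) ^ (Fintype.card ι - T.card)
      ≤ 2 ^ a * (1 - p / 2) ^ Fintype.card ι := by
  have hq : 0 ≤ 1 - p := by linarith
  calc _ ≤ ∑ T ∈ Finset.univ.filter (fun T : Finset ι => T.card ≤ a),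
          2 ^ a * ((p / 2) ^ T.card * (1 - p) ^ (Fintype.card ι - T.card)) := by
        refine Finset.sum_le_sum fun T hT => ?_
        have h2 : (2 : ℝ) ^ T.card ≤ 2 ^ a :=
          pow_le_pow_right₀ one_le_two (Finset.mem_filter.1 hT).2
        calc p ^ T.card * (1 - p) ^ (Fintype.card ι - T.card)
            = 2 ^ T.card * ((p / 2) ^ T.card * (1 - p) ^ (Fintype.card ι - T.card)) := by
              rw [div_pow]; field_simp
          _ ≤ _ := by gcongr
    _ ≤ 2 ^ a * ∑ T : Finset ι, (p / 2) ^ T.card * (1 - p) ^ (Fintype.card ι - T.card) := by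
        rw [← Finset.mul_sum]
        exact mul_le_mul_of_nonneg_left (Finset.sum_le_sum_of_subset_of_nonneg
          (Finset.filter_subset _ _) fun T _ _ => by positivity) (by positivity)
    _ = 2 ^ a * (1 - p / 2) ^ Fintype.card ι := by
        rw [Fintype.sum_pow_mul_eq_add_pow]; ring_nf

theorem ncard_preimage_eq_card_filter {ι α : Type*} [Fintype ι] (x : ι → α) (A : Set α)
    [DecidablePred fun j => x j ∈ A] :
    (x ⁻¹' A).ncard = (Finset.univ.filter fun j => x j ∈ A).card := by
  rw [← ncard_coe_finset, Finset.coe_filter_univ]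
  rfl

section RandomSample

variable {E : Type*} [MeasurableSpace E] (ν : Measure E) [IsProbabilityMeasure ν] {n : ℕ}

theorem measureReal_pi_univ_pi_ite (T : Finset (Fin n)) (A B : Set E) :
    (Measure.pi fun _ : Fin n => ν).real (univ.pi fun j => if j ∈ T then A else B)
      = ν.real A ^ T.card * ν.real B ^ (n - T.card) := by
  rw [measureReal_def, Measure.pi_pi, ENNReal.toReal_prod]
  simp only [apply_ite, ← measureReal_def]
  rw [Finset.prod_ite, Finset.prod_const, Finset.prod_const, Finset.filter_mem_eq_inter,
    Finset.univ_inter, Finset.filter_not, Finset.filter_mem_eq_inter, Finset.univ_inter,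
    Finset.card_sdiff_of_subset (Finset.subset_univ T), Finset.card_univ, Fintype.card_fin]

theorem measureReal_pi_ncard_preimage_le (A : Set E) (hA : MeasurableSet A) (a : ℕ) :
    (Measure.pi fun _ : Fin n => ν).real {x | (x ⁻¹' A).ncard ≤ a}
      ≤ 2 ^ a * Real.exp (-(n * ν.real A / 2)) := by
  classical
  have hcover : {x : Fin n → E | (x ⁻¹' A).ncard ≤ a}
      ⊆ ⋃ T ∈ Finset.univ.filter (fun T : Finset (Fin n) => T.card ≤ a),
          univ.pi fun j => if j ∈ T then A else Aᶜ := by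
    intro x hx
    refine mem_iUnion₂.2 ⟨Finset.univ.filter (fun j => x j ∈ A), ?_, fun j _ => ?_⟩
    · rw [Finset.mem_filter, ← ncard_preimage_eq_card_filter]
      exact ⟨Finset.mem_univ _, hx⟩
    · by_cases h : x j ∈ A <;> simp [h]
  calc _ ≤ ∑ T ∈ Finset.univ.filter (fun T : Finset (Fin n) => T.card ≤ a),
          (Measure.pi fun _ : Fin n => ν).real (univ.pi fun j => if j ∈ T then A else Aᶜ) :=
        (measureReal_mono hcover (measure_ne_top _ _)).trans (measureReal_biUnion_finset_le _ _)
    _ = ∑ T ∈ Finset.univ.filter (fun T : Finset (Fin n) => T.card ≤ a),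
          ν.real A ^ T.card * (1 - ν.real A) ^ (n - T.card) := by
        simp only [measureReal_pi_univ_pi_ite, probReal_compl_eq_one_sub hA]
    _ ≤ 2 ^ a * (1 - ν.real A / 2) ^ n := by
        simpa using sum_pow_mul_pow_of_card_le_le (ι := Fin n) a measureReal_nonneg
          measureReal_le_one
    _ ≤ 2 ^ a * Real.exp (-(n * ν.real A / 2)) := by
        have : 0 ≤ 1 - ν.real A / 2 := by linarith [measureReal_le_one (μ := ν) (s := A)]
        rw [show -(n * ν.real A / 2) = n * (-(ν.real A / 2)) by ring, Real.exp_nat_mul]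
        gcongr
        linarith [Real.add_one_le_exp (-(ν.real A / 2))]

theorem measureReal_pi_le_ncard_preimage (B : Set E) (K : ℕ) :
    (Measure.pi fun _ : Fin n => ν).real {x | K ≤ (x ⁻¹' B).ncard}
      ≤ n.choose K * ν.real B ^ K := by
  classical
  have hcover : {x : Fin n → E | K ≤ (x ⁻¹' B).ncard}
      ⊆ ⋃ T ∈ Finset.univ.powersetCard K, univ.pi fun j => if j ∈ T then B else univ := by
    intro x hx
    rw [mem_ofPred_eq, ncard_preimage_eq_card_filter] at hx
    obtain ⟨T, hTsub, hTcard⟩ := Finset.exists_subset_card_eq hx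
    refine mem_iUnion₂.2 ⟨T, Finset.mem_powersetCard.2 ⟨Finset.subset_univ T, hTcard⟩,
      fun j _ => ?_⟩
    by_cases h : j ∈ T
    · simpa [h] using (Finset.mem_filter.1 (hTsub h)).2
    · simp [h]
  calc _ ≤ ∑ T ∈ Finset.univ.powersetCard K,
          (Measure.pi fun _ : Fin n => ν).real (univ.pi fun j => if j ∈ T then B else univ) :=
        (measureReal_mono hcover (measure_ne_top _ _)).trans (measureReal_biUnion_finset_le _ _)
    _ = n.choose K * ν.real B ^ K := by
        rw [Finset.sum_congr rfl fun T hT => by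
          rw [measureReal_pi_univ_pi_ite, (Finset.mem_powersetCard.1 hT).2, probReal_univ,
            one_pow, mul_one]]
        rw [Finset.sum_const, Finset.card_powersetCard, Finset.card_univ, Fintype.card_fin,
          nsmul_eq_mul]

theorem measure_pi_setOf_apply_eq_apply_eq_zero [MeasurableEq E] [NullSingletonClass ν]
    {ι : Type*} [Fintype ι] {i j : ι} (hij : i ≠ j) :
    Measure.pi (fun _ : ι => ν) {x | x i = x j} = 0 := by
  set μ := Measure.pi fun _ : ι => ν
  have hind : IndepFun (fun x : ι → E => x i) (fun x => x j) μ :=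
    (iIndepFun_pi (X := fun _ => id) fun _ => aemeasurable_id).indepFun hij
  have hlaw : μ.map (fun x => (x i, x j)) = ν.prod ν := by
    rw [hind.map_prod_eq_prod_map_map (measurable_pi_apply i).aemeasurable
      (measurable_pi_apply j).aemeasurable, (measurePreserving_eval _ i).map_eq,
      (measurePreserving_eval _ j).map_eq]
  have hdiag : (ν.prod ν) (diagonal E) = 0 := by
    rw [Measure.prod_apply measurableSet_diagonal]
    simp [preimage, diagonal, measure_singleton]
  rw [← hdiag, ← hlaw, Measure.map_apply (by fun_prop) measurableSet_diagonal]
  rfl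

theorem ae_injective_pi [MeasurableEq E] [NullSingletonClass ν] {ι : Type*} [Fintype ι] :
    ∀ᵐ x ∂Measure.pi (fun _ : ι => ν), Function.Injective x := by
  have : ∀ᵐ x ∂Measure.pi (fun _ : ι => ν), ∀ i j, i ≠ j → x i ≠ x j := by
    refine ae_all_iff.2 fun i => ae_all_iff.2 fun j => ?_
    by_cases hij : i = j
    · simp [hij]
    · simpa [ae_iff, hij] using measure_pi_setOf_apply_eq_apply_eq_zero ν hij
  filter_upwards [this] with x hx i j
  exact not_imp_not.1 (hx i j)

theorem exists_injective_ncard_preimage_bounds [MeasurableEq E] [NullSingletonClass ν]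
    {C : Set E} (hC : ∀ᵐ y ∂ν, y ∈ C) {m : ℕ} {R : Fin m → Set E}
    (hR : ∀ i, MeasurableSet (R i)) {a K : ℕ} {p q : ℝ}
    (hp : ∀ i, p ≤ ν.real (R i)) (hq₀ : 0 ≤ q) (hq : ∀ i j, i ≠ j → ν.real (R i ∩ R j) ≤ q)
    (hsmall : m * (2 ^ a * Real.exp (-(n * p / 2))) + m ^ 2 * (n.choose K * q ^ K) < 1) :
    ∃ x : Fin n → E, Function.Injective x ∧ (∀ k, x k ∈ C) ∧
      (∀ i, a < (x ⁻¹' R i).ncard) ∧ ∀ i j, i ≠ j → (x ⁻¹' (R i ∩ R j)).ncard < K := by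
  set μ := Measure.pi fun _ : Fin n => ν
  set sparse := ⋃ i, {x : Fin n → E | (x ⁻¹' R i).ncard ≤ a}
  set crowded := ⋃ ij ∈ (Finset.univ : Finset (Fin m)).offDiag,
    {x : Fin n → E | K ≤ (x ⁻¹' (R ij.1 ∩ R ij.2)).ncard}
  have hsparse : μ.real sparse ≤ m * (2 ^ a * Real.exp (-(n * p / 2))) := by
    refine (measureReal_iUnion_fintype_le _).trans ?_
    calc _ ≤ ∑ _i : Fin m, 2 ^ a * Real.exp (-(n * p / 2)) := by
          refine Finset.sum_le_sum fun i _ =>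
            (measureReal_pi_ncard_preimage_le ν _ (hR i) a).trans ?_
          gcongr
          exact hp i
      _ = _ := by simp
  have hcrowded : μ.real crowded ≤ m ^ 2 * (n.choose K * q ^ K) := by
    refine (measureReal_biUnion_finset_le _ _).trans ?_
    calc _ ≤ ∑ _ij ∈ (Finset.univ : Finset (Fin m)).offDiag, (n.choose K * q ^ K : ℝ) := by
          refine Finset.sum_le_sum fun ij hij =>
            (measureReal_pi_le_ncard_preimage ν _ K).trans ?_
          gcongr
          exact hq _ _ (Finset.mem_offDiag.1 hij).2.2
      _ ≤ _ := by
          rw [Finset.sum_const, nsmul_eq_mul]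
          gcongr
          rw [Finset.offDiag_card, Finset.card_univ, Fintype.card_fin]
          exact_mod_cast (Nat.sub_le _ _).trans (sq m).ge
  have hgood : ∀ᵐ x ∂μ, Function.Injective x ∧ ∀ k, x k ∈ C :=
    (ae_injective_pi ν).and
      (ae_all_iff.2 fun k => (Measure.quasiMeasurePreserving_eval _ k).ae hC)
  by_contra! hbad
  have hcover : (univ : Set (Fin n → E)) ≤ᵐ[μ] (sparse ∪ crowded : Set (Fin n → E)) := by
    filter_upwards [hgood] with x ⟨hinj, hC⟩ _
    obtain ⟨i, hi⟩ | ⟨i, j, hij, hK⟩ : (∃ i, (x ⁻¹' R i).ncard ≤ a) ∨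
        ∃ i j, i ≠ j ∧ K ≤ (x ⁻¹' (R i ∩ R j)).ncard := by
      by_contra! h
      obtain ⟨i, j, hij, hK⟩ := hbad x hinj hC h.1
      exact (h.2 i j hij).not_ge hK
    · exact Or.inl (mem_iUnion.2 ⟨i, hi⟩)
    · exact Or.inr (mem_iUnion₂.2 ⟨(i, j), by simpa using hij, hK⟩)
  have hone : μ (sparse ∪ crowded) = 1 :=
    le_antisymm prob_le_one (by simpa using measure_mono_ae hcover)
  have := (measureReal_union_le (μ := μ) sparse crowded).trans (add_le_add hsparse hcrowded)
  rw [measureReal_def, hone, ENNReal.toReal_one] at this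
  linarith

end RandomSample

theorem natCast_mul_two_pow_floor_mul_exp_lt_half {c t : ℝ} {n m : ℕ} (hc : 2 ≤ c) (hn : 3 ≤ n)
    (ht : Real.log n ≤ t) (hm : (m : ℝ) ≤ (n : ℝ) ^ c) :
    m * (2 ^ ⌊t⌋₊ * Real.exp (-(n * (4 * c * t / n) / 2))) < 1 / 2 := by
  have hn₀ : (0 : ℝ) < n := by positivity
  have ht₀ : 0 ≤ t := (Real.log_nonneg (by exact_mod_cast (by omega : 1 ≤ n))).trans ht
  have hm' : (m : ℝ) ≤ Real.exp (c * t) := by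
    refine hm.trans ?_
    rw [Real.rpow_def_of_pos hn₀]
    exact Real.exp_le_exp.2 (by nlinarith)
  have h2 : (2 : ℝ) ^ ⌊t⌋₊ ≤ Real.exp (t * Real.log 2) := by
    rw [← Real.rpow_natCast, Real.rpow_def_of_pos two_pos, mul_comm]
    gcongr
    exact Nat.floor_le ht₀
  have hexp : n * (4 * c * t / n) / 2 = 2 * c * t := by field_simp; ring
  calc (m : ℝ) * (2 ^ ⌊t⌋₊ * Real.exp (-(n * (4 * c * t / n) / 2)))
      ≤ Real.exp (c * t) * (Real.exp (t * Real.log 2) * Real.exp (-(2 * c * t))) := by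
        rw [hexp]; gcongr
    _ = Real.exp (-((c - Real.log 2) * t)) := by rw [← Real.exp_add, ← Real.exp_add]; ring_nf
    _ ≤ Real.exp (-Real.log n) := by
        gcongr
        nlinarith [Real.log_two_lt_d9]
    _ = (n : ℝ)⁻¹ := by rw [Real.exp_neg, Real.exp_log hn₀]
    _ < 1 / 2 := by
        rw [inv_lt_comm₀ hn₀ (by norm_num)]
        norm_num
        exact_mod_cast (by omega : 2 < n)

theorem sq_mul_choose_mul_pow_lt_half {c c₀ s : ℝ} {n m : ℕ} (hc : 1 ≤ c) (hc₀ : 0 < c₀)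
    (hn : 1 ≤ n) (hs : Real.log n = s ^ 2 * Real.log 2) (hc₀s : c₀ ≤ 2 ^ s)
    (hlog : 3 * s * Real.log c₀ + 1 ≤ Real.log n) (hm : (m : ℝ) ≤ (n : ℝ) ^ c) :
    m ^ 2 * (n.choose (⌊3 * c * s⌋₊ + 1) * (c₀ / (n * 2 ^ s)) ^ (⌊3 * c * s⌋₊ + 1)) < 1 / 2 := by
  set K := ⌊3 * c * s⌋₊ + 1
  have hn₀ : (0 : ℝ) < n := by exact_mod_cast hn
  have hβ₀ : 0 < c₀ / 2 ^ s := by positivity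
  have hβ₁ : c₀ / 2 ^ s ≤ 1 := (div_le_one (by positivity)).2 hc₀s
  have hm2 : (m : ℝ) ^ 2 ≤ Real.exp (2 * c * Real.log n) := by
    calc (m : ℝ) ^ 2 ≤ ((n : ℝ) ^ c) ^ 2 := by gcongr
      _ = _ := by rw [Real.rpow_def_of_pos hn₀, ← Real.exp_nat_mul]; ring_nf
  have hchoose : (n.choose K : ℝ) * (c₀ / (n * 2 ^ s)) ^ K ≤ (c₀ / 2 ^ s) ^ K := by
    calc (n.choose K : ℝ) * (c₀ / (n * 2 ^ s)) ^ K ≤ (n : ℝ) ^ K * (c₀ / (n * 2 ^ s)) ^ K := by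
          gcongr
          exact_mod_cast Nat.choose_le_pow n K
      _ = (c₀ / 2 ^ s) ^ K := by rw [← mul_pow]; field_simp
  have hK : (c₀ / 2 ^ s) ^ K ≤ Real.exp (3 * c * s * (Real.log c₀ - s * Real.log 2)) := by
    rw [← Real.rpow_natCast]
    calc (c₀ / 2 ^ s) ^ (K : ℝ) ≤ (c₀ / 2 ^ s) ^ (3 * c * s) :=
          Real.rpow_le_rpow_of_exponent_ge hβ₀ hβ₁
            (by push_cast [K]; exact (Nat.lt_floor_add_one _).le)
      _ = _ := by
          rw [Real.rpow_def_of_pos hβ₀, Real.log_div hc₀.ne' (by positivity),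
            Real.log_rpow two_pos, mul_comm]
  calc (m : ℝ) ^ 2 * (n.choose K * (c₀ / (n * 2 ^ s)) ^ K)
      ≤ Real.exp (2 * c * Real.log n) *
          Real.exp (3 * c * s * (Real.log c₀ - s * Real.log 2)) := by
        gcongr
        exact hchoose.trans hK
    _ = Real.exp (c * (3 * s * Real.log c₀ - Real.log n)) := by
        rw [← Real.exp_add, hs]; ring_nf
    _ ≤ Real.exp (-1) := by
        gcongr
        nlinarith
    _ < 1 / 2 := Real.exp_neg_one_lt_half

theorem sqrt_logb_two_sq_mul_log_two {n : ℕ} (hn : 1 ≤ n) :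
    Real.log n = √(Real.logb 2 n) ^ 2 * Real.log 2 := by
  rw [Real.sq_sqrt (Real.logb_nonneg one_lt_two (by exact_mod_cast hn)), Real.logb,
    div_mul_cancel₀ _ (Real.log_pos one_lt_two).ne']

theorem eventually_sqrt_logb_two_large (c₀ : ℝ) :
    ∀ᶠ n : ℕ in atTop, 3 ≤ n ∧ c₀ ≤ 2 ^ √(Real.logb 2 n) ∧
      3 * √(Real.logb 2 n) * Real.log c₀ + 1 ≤ Real.log n := by
  have hs : Tendsto (fun n : ℕ => √(Real.logb 2 n)) atTop atTop :=
    Real.tendsto_sqrt_atTop.comp ((Real.tendsto_logb_atTop one_lt_two).comp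
      tendsto_natCast_atTop_atTop)
  have hlog2 := Real.log_pos one_lt_two
  filter_upwards [eventually_ge_atTop 3,
    hs.eventually_ge_atTop (max 1 (max c₀ (3 * |Real.log c₀| + 1) / Real.log 2))] with n hn hsn
  set s := √(Real.logb 2 n)
  have hs1 : 1 ≤ s := (le_max_left _ _).trans hsn
  have hsl : max c₀ (3 * |Real.log c₀| + 1) ≤ s * Real.log 2 :=
    (div_le_iff₀ hlog2).1 ((le_max_right _ _).trans hsn)
  refine ⟨hn, ?_, ?_⟩
  · calc c₀ ≤ s * Real.log 2 + 1 := by linarith [le_max_left c₀ (3 * |Real.log c₀| + 1)]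
      _ ≤ Real.exp (s * Real.log 2) := by linarith [Real.add_one_le_exp (s * Real.log 2)]
      _ = 2 ^ s := by rw [Real.rpow_def_of_pos two_pos, mul_comm]
  · rw [sqrt_logb_two_sq_mul_log_two (by omega : 1 ≤ n)]
    have h3 : 3 * |Real.log c₀| + 1 ≤ s * Real.log 2 := (le_max_right _ _).trans hsl
    nlinarith [le_abs_self (Real.log c₀)]

instance ProbabilityTheory.cond.instNullSingletonClass {α : Type*} [MeasurableSpace α]
    (μ : Measure α) [NullSingletonClass μ] (s : Set α) : NullSingletonClass μ[|s] :=
  ⟨fun x => by simp [cond, measure_singleton]⟩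

section Cube

variable {D : ℕ} {l : ℝ}

theorem volume_real_Icc_zero_const (hl : 0 < l) :
    volume.real (Icc (0 : Fin D → ℝ) fun _ => l) = l ^ D := by
  rw [measureReal_def, Real.volume_Icc_pi_toReal (a := 0) fun _ => hl.le]
  simp

theorem isProbabilityMeasure_cond_Icc_zero_const (hl : 0 < l) :
    IsProbabilityMeasure (volume[|Icc (0 : Fin D → ℝ) fun _ => l]) := by
  have h := volume_real_Icc_zero_const (D := D) hl
  refine cond_isProbabilityMeasure_of_finite ?_ measure_Icc_lt_top.ne
  intro h0
  rw [measureReal_def, h0] at h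
  exact (pow_pos hl D).ne' (by simpa using h.symm)

theorem measureReal_cond_Icc_zero_const (hl : 0 < l) {B : Set (Fin D → ℝ)}
    (hB : B ⊆ Icc 0 fun _ => l) :
    (volume[|Icc (0 : Fin D → ℝ) fun _ => l]).real B = volume.real B / l ^ D := by
  rw [measureReal_def, cond_apply measurableSet_Icc, inter_eq_self_of_subset_right hB,
    ENNReal.toReal_mul, ENNReal.toReal_inv, ← measureReal_def, ← measureReal_def,
    volume_real_Icc_zero_const hl, inv_mul_eq_div]

theorem le_measureReal_cond_Icc_zero_const (hl : 0 < l) {B : Set (Fin D → ℝ)}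
    (hB : B ⊆ Icc 0 fun _ => l) {r : ℝ} (h : ENNReal.ofReal (r * l ^ D) ≤ volume B) :
    r ≤ (volume[|Icc (0 : Fin D → ℝ) fun _ => l]).real B := by
  rw [measureReal_cond_Icc_zero_const hl hB, le_div_iff₀ (by positivity)]
  exact (ENNReal.ofReal_le_iff_le_toReal
    ((measure_mono hB).trans_lt measure_Icc_lt_top).ne).1 h

theorem measureReal_cond_Icc_zero_const_le (hl : 0 < l) {B : Set (Fin D → ℝ)}
    (hB : B ⊆ Icc 0 fun _ => l) {r : ℝ} (hr : 0 ≤ r)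
    (h : volume B ≤ ENNReal.ofReal (r * l ^ D)) :
    (volume[|Icc (0 : Fin D → ℝ) fun _ => l]).real B ≤ r := by
  rw [measureReal_cond_Icc_zero_const hl hB, div_le_iff₀ (by positivity)]
  exact ENNReal.toReal_le_of_le_ofReal (by positivity) h

end Cube

theorem Function.Injective.ncard_range_inter {ι α : Type*} {x : ι → α}
    (hx : Function.Injective x) (B : Set α) : (range x ∩ B).ncard = (x ⁻¹' B).ncard := by
  rw [inter_comm, ← image_preimage_eq_inter_range, ncard_image_of_injective _ hx]

/-- Derandomized core of the lower-bound framework: for sufficiently large `n`,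
given ranges `R₁, …, R_m` (with `m ≤ n^c`) inside the cube `[0,l]^D`, each of
Lebesgue measure at least `4·c·l^D·t/n`, with pairwise intersections of measure at
most `c₀·l^D/(n·2^(√(log₂ n)))`, there is a set `S` of `n` points in the cube such
that every range contains at least `t` points of `S` and every pairwise
intersection contains at most `3·c·√(log₂ n)` points of `S`. -/
theorem statement0 (D : ℕ) (hD : 1 ≤ D) (c : ℝ) (hc : 2 ≤ c) (c₀ : ℝ) (hc₀ : 0 < c₀) :
    ∃ N : ℕ, ∀ n : ℕ, N ≤ n →
      ∀ l : ℝ, 0 < l →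
      ∀ t : ℝ, Real.log n ≤ t →
      ∀ m : ℕ, ∀ R : Fin m → Set (Fin D → ℝ),
        (m : ℝ) ≤ (n : ℝ) ^ c →
        (∀ i, MeasurableSet (R i)) →
        (∀ i, R i ⊆ Set.Icc (0 : Fin D → ℝ) (fun _ => l)) →
        (∀ i, ENNReal.ofReal (4 * c * l ^ D * t / n) ≤ volume (R i)) →
        (∀ i j, i ≠ j →
          volume (R i ∩ R j) ≤
            ENNReal.ofReal (c₀ * l ^ D / (n * 2 ^ Real.sqrt (Real.logb 2 n)))) →
        ∃ S : Finset (Fin D → ℝ),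
          S.card = n ∧
          (S : Set (Fin D → ℝ)) ⊆ Set.Icc (0 : Fin D → ℝ) (fun _ => l) ∧
          (∀ i, t ≤ (((S : Set (Fin D → ℝ)) ∩ R i).ncard : ℝ)) ∧
          (∀ i j, i ≠ j →
            ((((S : Set (Fin D → ℝ)) ∩ R i ∩ R j).ncard : ℝ) ≤
              3 * c * Real.sqrt (Real.logb 2 n))) := by
  obtain ⟨N, hN⟩ := (eventually_sqrt_logb_two_large c₀).exists_forall_of_atTop
  refine ⟨N, fun n hn l hl t ht m R hm hRmeas hRsub hRvol hRint => ?_⟩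
  obtain ⟨hn₃, hc₀s, hlog⟩ := hN n hn
  set s := √(Real.logb 2 n)
  have : Nonempty (Fin D) := ⟨⟨0, hD⟩⟩
  have := isProbabilityMeasure_cond_Icc_zero_const (D := D) hl
  have hsmall := add_lt_add (natCast_mul_two_pow_floor_mul_exp_lt_half hc hn₃ ht hm)
    (sq_mul_choose_mul_pow_lt_half (by linarith) hc₀ (by omega)
      (sqrt_logb_two_sq_mul_log_two (by omega)) hc₀s hlog hm)
  obtain ⟨x, hinj, hxC, hsparse, hcrowded⟩ :=
    exists_injective_ncard_preimage_bounds (volume[|Icc (0 : Fin D → ℝ) fun _ => l])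
      (ae_cond_mem measurableSet_Icc) hRmeas (p := 4 * c * t / n) (q := c₀ / (n * 2 ^ s))
      (fun i => le_measureReal_cond_Icc_zero_const hl (hRsub i)
        (by convert hRvol i using 2; ring))
      (by positivity)
      (fun i j hij => measureReal_cond_Icc_zero_const_le hl (inter_subset_left.trans (hRsub i))
        (by positivity) (by convert hRint i j hij using 2; ring))
      (hsmall.trans_eq (add_halves 1))
  have hS : ((Finset.univ.image x : Finset (Fin D → ℝ)) : Set (Fin D → ℝ)) = range x := by
    simp
  refine ⟨Finset.univ.image x, ?_, ?_, fun i => ?_, fun i j hij => ?_⟩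
  · simp [Finset.card_image_of_injective _ hinj]
  · exact hS ▸ range_subset_iff.2 hxC
  · rw [hS, hinj.ncard_range_inter]
    exact (Nat.lt_floor_add_one t).le.trans (by exact_mod_cast hsparse i)
  · rw [hS, inter_assoc, hinj.ncard_range_inter]
    exact (Nat.cast_le.2 (Nat.lt_succ_iff.1 (hcrowded i j hij))).trans
      (Nat.floor_le (by positivity))
end

section
/- Let D ≥ 1 and k ≥ 2 be integers, let c ≥ 4k and A > 0 be reals. There exists N such that for all n ≥ N the following holds. Let l > 0, let C = [0,l]^D, let t be a real number with t ≥ ln n, and let 𝓡 be a finite family of Borel subsets of C with |𝓡| ≤ A·n^{k+1} such that every R ∈ 𝓡 has Lebesgue measure at least c·l^D·t/n. If X₁, …, X_n are independent random points, each uniformly distributed on C, then with probability strictly greater than 1/2, for every R ∈ 𝓡 at least t of the points X₁, …, X_n lie in R. -/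
/-!
For a single range `R` of probability `p ≥ c t / n` under the uniform distribution on the cube,
the number of sample points in `R` is a sum of `n` independent Bernoulli(`p`) variables, so the
lower-tail Chernoff bound with parameter `-1` gives
`P(fewer than t hits) ≤ e^t (1 - (1 - e⁻¹) p)^n ≤ exp (t - (1 - e⁻¹) c t) ≤ n^{-(k+2)}`,
using `1 - e⁻¹ ≥ 5/8`, `c ≥ 4k`, `k ≥ 2` and `t ≥ log n`. A union bound over the at most
`A n^{k+1}` ranges leaves a failure probability of at most `A / n < 1/2`.
-/

open MeasureTheory Set ProbabilityTheory Real

lemma ncard_mem_eq_sum_indicator {Ω ι : Type*} [Fintype ι] (R : Set Ω) (x : ι → Ω) :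
    (({i | x i ∈ R}.ncard : ℕ) : ℝ) = ∑ i, R.indicator 1 (x i) := by
  classical
  rw [Set.ncard_eq_toFinset_card', Set.toFinset_ofPred, Finset.card_filter]
  push_cast
  simp [Set.indicator_apply]

section Probability

variable {Ω : Type*} [MeasurableSpace Ω]

lemma one_sub_sum_measureReal_le_measureReal_forall (P : Measure Ω) [IsProbabilityMeasure P]
    {β : Type*} (s : Finset β) (Q : β → Ω → Prop) :
    1 - ∑ b ∈ s, P.real {ω | ¬ Q b ω} ≤ P.real {ω | ∀ b ∈ s, Q b ω} := by
  set G := {ω | ∀ b ∈ s, Q b ω}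
  have hGc : Gᶜ = ⋃ b ∈ s, {ω | ¬ Q b ω} := by ext; simp [G]
  have hcover : 1 ≤ P.real G + P.real Gᶜ := by
    simpa [union_compl_self] using measureReal_union_le (μ := P) G Gᶜ
  have hunion := measureReal_biUnion_finset_le (μ := P) s fun b => {ω | ¬ Q b ω}
  rw [← hGc] at hunion
  linarith

lemma mgf_sum_comp_pi {ι : Type*} [Fintype ι] (μ : Measure Ω) [SigmaFinite μ] (f : Ω → ℝ)
    (t : ℝ) :
    mgf (fun x : ι → Ω => ∑ i, f (x i)) (Measure.pi fun _ => μ) t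
      = mgf f μ t ^ Fintype.card ι := by
  simp only [mgf, Finset.mul_sum, Real.exp_sum]
  exact integral_fintype_prod_eq_pow (μ := μ) fun ω => exp (t * f ω)

lemma mgf_indicator_one (μ : Measure Ω) [IsProbabilityMeasure μ] {R : Set Ω}
    (hR : MeasurableSet R) (t : ℝ) :
    mgf (R.indicator 1) μ t = 1 + (exp t - 1) * μ.real R := by
  have hexp : (fun ω => exp (t * R.indicator 1 ω))
      = fun ω => 1 + R.indicator (fun _ => exp t - 1) ω := by
    ext ω
    by_cases h : ω ∈ R <;> simp [h]
  rw [mgf, hexp, integral_add (integrable_const _) ((integrable_const _).indicator hR),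
    integral_indicator_const _ hR]
  simp [mul_comm]

theorem measureReal_pi_ncard_lt_le (μ : Measure Ω) [IsProbabilityMeasure μ] {R : Set Ω}
    (hR : MeasurableSet R) {ι : Type*} [Fintype ι] (t : ℝ) :
    (Measure.pi fun _ : ι => μ).real {x | (({i | x i ∈ R}.ncard : ℕ) : ℝ) < t}
      ≤ exp (t - (1 - exp (-1)) * Fintype.card ι * μ.real R) := by
  set X : (ι → Ω) → ℝ := fun x => ∑ i, R.indicator 1 (x i)
  have hX : Measurable X :=
    Finset.measurable_sum _ fun i _ => (measurable_const.indicator hR).comp (measurable_pi_apply i)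
  have hX0 : ∀ x, 0 ≤ X x := fun x =>
    Finset.sum_nonneg fun i _ => Set.indicator_nonneg (fun _ _ => zero_le_one) _
  have hint : Integrable (fun x => exp (-1 * X x)) (Measure.pi fun _ : ι => μ) :=
    Integrable.of_bound (by fun_prop) 1 (ae_of_all _ fun x => by
      simpa [abs_of_pos (exp_pos _)] using hX0 x)
  have hp : 1 - (1 - exp (-1)) * μ.real R ≤ exp (-((1 - exp (-1)) * μ.real R)) := by
    linarith [add_one_le_exp (-((1 - exp (-1)) * μ.real R))]
  have hp0 : 0 ≤ 1 - (1 - exp (-1)) * μ.real R := by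
    nlinarith [exp_pos (-1), measureReal_nonneg (μ := μ) (s := R),
      measureReal_le_one (μ := μ) (s := R)]
  calc _ ≤ (Measure.pi fun _ : ι => μ).real {x | X x ≤ t} :=
        measureReal_mono fun x hx => by
          simpa [X, ← ncard_mem_eq_sum_indicator] using le_of_lt hx
    _ ≤ exp (-(-1) * t) * mgf X (Measure.pi fun _ : ι => μ) (-1) :=
        measure_le_le_exp_mul_mgf t (by norm_num) hint
    _ = exp t * (1 - (1 - exp (-1)) * μ.real R) ^ Fintype.card ι := by
        rw [mgf_sum_comp_pi, mgf_indicator_one μ hR]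
        ring_nf
    _ ≤ exp t * exp (-((1 - exp (-1)) * μ.real R)) ^ Fintype.card ι := by gcongr
    _ = exp (t - (1 - exp (-1)) * Fintype.card ι * μ.real R) := by
        rw [← exp_nat_mul, ← exp_add]
        ring_nf

lemma toNNReal_inv_smul_restrict_eq_cond (μ : Measure Ω) {s : Set Ω} (hs : μ s ≠ 0) :
    (μ s)⁻¹.toNNReal • μ.restrict s = μ[|s] := by
  rw [ProbabilityTheory.cond, ← ENNReal.coe_toNNReal (ENNReal.inv_ne_top.2 hs)]
  rfl

lemma measureReal_cond_of_subset (μ : Measure Ω) {s R : Set Ω} (hs : MeasurableSet s)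
    (hRs : R ⊆ s) : μ[|s].real R = μ.real R / μ.real s := by
  rw [measureReal_def, cond_apply hs, inter_eq_self_of_subset_right hRs, ENNReal.toReal_mul,
    ENNReal.toReal_inv, div_eq_inv_mul]
  rfl

lemma le_measureReal_cond_of_subset (μ : Measure Ω) {s R : Set Ω} (hs : MeasurableSet s)
    (hRs : R ⊆ s) (hs0 : 0 < μ.real s) {a : ℝ} (h : ENNReal.ofReal (a * μ.real s) ≤ μ R) :
    a ≤ μ[|s].real R := by
  rw [measureReal_cond_of_subset μ hs hRs, le_div_iff₀ hs0]
  have hRtop : μ R ≠ ⊤ := ne_top_of_le_ne_top (ENNReal.toReal_pos_iff.1 hs0).2.ne (measure_mono hRs)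
  exact (ENNReal.ofReal_le_iff_le_toReal hRtop).1 h

end Probability

lemma exp_sub_mul_le_inv_pow {k n : ℕ} {c t p : ℝ} (hk : 2 ≤ k) (hc : 4 * k ≤ c) (hn : 0 < n)
    (ht : log n ≤ t) (hp : c * t / n ≤ p) :
    exp (t - (1 - exp (-1)) * n * p) ≤ ((n : ℝ) ^ (k + 2))⁻¹ := by
  have hnR : (0 : ℝ) < n := by exact_mod_cast hn
  have hkR : (2 : ℝ) ≤ k := by exact_mod_cast hk
  have he : exp (-1) ≤ 3 / 8 := by
    rw [exp_neg, inv_le_comm₀ (exp_pos 1) (by norm_num)]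
    linarith [exp_one_gt_d9]
  have ht0 : 0 ≤ t := (log_natCast_nonneg n).trans ht
  have hnp : c * t ≤ n * p := by rwa [div_le_iff₀' hnR] at hp
  have hnp0 : 0 ≤ n * p := (mul_nonneg (by linarith) ht0).trans hnp
  have hexponent : t - (1 - exp (-1)) * n * p ≤ -((k + 2) * t) := by
    nlinarith [exp_pos (-1)]
  calc exp (t - (1 - exp (-1)) * n * p) ≤ exp (-log ((n : ℝ) ^ (k + 2))) := by
        rw [exp_le_exp, log_pow]
        push_cast
        nlinarith
    _ = ((n : ℝ) ^ (k + 2))⁻¹ := by rw [exp_neg, exp_log (by positivity)]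

lemma mul_inv_pow_succ_succ_lt_half {m A : ℝ} {n k : ℕ} (hm : m ≤ A * (n : ℝ) ^ (k + 1))
    (hn : 2 * A < n) (hn0 : 0 < n) : m * ((n : ℝ) ^ (k + 2))⁻¹ < 1 / 2 := by
  have hnR : (0 : ℝ) < n := by exact_mod_cast hn0
  calc m * ((n : ℝ) ^ (k + 2))⁻¹ ≤ A * n ^ (k + 1) * ((n : ℝ) ^ (k + 2))⁻¹ := by gcongr
    _ = A / n := by field_simp; ring
    _ < 1 / 2 := by rw [div_lt_div_iff₀ hnR two_pos]; linarith

theorem statement1_general (D k : ℕ) (hk : 2 ≤ k) (c A : ℝ)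
    (hc : 4 * (k : ℝ) ≤ c) :
    ∃ N : ℕ, ∀ n : ℕ, N ≤ n →
      ∀ l : ℝ, 0 < l →
      ∀ t : ℝ, Real.log n ≤ t →
      ∀ 𝓡 : Finset (Set (Fin D → ℝ)),
        (𝓡.card : ℝ) ≤ A * (n : ℝ) ^ (k + 1) →
        (∀ R ∈ 𝓡, MeasurableSet R) →
        (∀ R ∈ 𝓡, R ⊆ Set.Icc (0 : Fin D → ℝ) (fun _ => l)) →
        (∀ R ∈ 𝓡, ENNReal.ofReal (c * l ^ D * t / n) ≤ volume R) →
        (1 : ENNReal) / 2 <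
          Measure.pi
            (fun _ : Fin n =>
              ((volume (Set.Icc (0 : Fin D → ℝ) (fun _ => l)))⁻¹.toNNReal •
                volume.restrict (Set.Icc (0 : Fin D → ℝ) (fun _ => l))))
            {x : Fin n → (Fin D → ℝ) |
              ∀ R ∈ 𝓡, t ≤ (({i : Fin n | x i ∈ R}).ncard : ℝ)} := by
  refine ⟨⌈2 * A⌉₊ + 1, fun n hn l hl t ht 𝓡 hcard hmeas hsub hvol => ?_⟩
  have hnA : 2 * A < n := Nat.lt_of_ceil_lt (Nat.lt_of_succ_le hn)
  have hn0 : 0 < n := Nat.zero_lt_of_lt hn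
  set C : Set (Fin D → ℝ) := Icc 0 fun _ => l
  have hCvol : volume C = ENNReal.ofReal (l ^ D) := by
    simp [C, Real.volume_Icc_pi, ENNReal.ofReal_pow hl.le]
  have hC0 : volume C ≠ 0 := by simp [hCvol, pow_pos hl D]
  have hCreal : volume.real C = l ^ D := by simp [measureReal_def, hCvol, hl.le]
  rw [toNNReal_inv_smul_restrict_eq_cond _ hC0]
  have := cond_isProbabilityMeasure_of_finite hC0 (by simp [hCvol])
  set P := Measure.pi fun _ : Fin n => volume[|C]
  have hbad : ∀ R ∈ 𝓡,
      P.real {x | ¬ t ≤ (({i : Fin n | x i ∈ R}).ncard : ℝ)} ≤ ((n : ℝ) ^ (k + 2))⁻¹ := by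
    intro R hR
    have hp : c * t / n ≤ volume[|C].real R :=
      le_measureReal_cond_of_subset _ measurableSet_Icc (hsub R hR) (hCreal ▸ pow_pos hl D)
        (by rw [hCreal]; convert hvol R hR using 2; ring)
    have hchernoff := measureReal_pi_ncard_lt_le volume[|C] (hmeas R hR) (ι := Fin n) t
    rw [Fintype.card_fin] at hchernoff
    simpa only [not_le] using hchernoff.trans (exp_sub_mul_le_inv_pow hk hc hn0 ht hp)
  have hsum := (Finset.sum_le_sum hbad).trans_lt
    (by simpa using mul_inv_pow_succ_succ_lt_half hcard hnA hn0)
  have hgood := one_sub_sum_measureReal_le_measureReal_forall P 𝓡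
    fun R x => t ≤ (({i : Fin n | x i ∈ R}).ncard : ℝ)
  have hhalf := (ENNReal.ofReal_lt_iff_lt_toReal (by norm_num : (0 : ℝ) ≤ 1 / 2)
    (measure_ne_top P _)).2 ((by linarith : (1 : ℝ) / 2 < _).trans_le hgood)
  simpa using hhalf

/-- Derandomization lemma for slabs: if every range in a not-too-large family `𝓡`
of ranges inside the cube `C = [0,l]^D` has Lebesgue measure at least `c·l^D·t/n`,
then `n` independent uniformly random points in `C` hit every range at least `t`
times with probability greater than `1/2`. The `n` independent uniform points are
modeled by the `n`-fold product of the normalized restriction of Lebesgue measure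
to `C`. -/
theorem statement1 (D k : ℕ) (hD : 1 ≤ D) (hk : 2 ≤ k) (c A : ℝ)
    (hc : 4 * (k : ℝ) ≤ c) (hA : 0 < A) :
    ∃ N : ℕ, ∀ n : ℕ, N ≤ n →
      ∀ l : ℝ, 0 < l →
      ∀ t : ℝ, Real.log n ≤ t →
      ∀ 𝓡 : Finset (Set (Fin D → ℝ)),
        (𝓡.card : ℝ) ≤ A * (n : ℝ) ^ (k + 1) →
        (∀ R ∈ 𝓡, MeasurableSet R) →
        (∀ R ∈ 𝓡, R ⊆ Set.Icc (0 : Fin D → ℝ) (fun _ => l)) →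
        (∀ R ∈ 𝓡, ENNReal.ofReal (c * l ^ D * t / n) ≤ volume R) →
        (1 : ENNReal) / 2 <
          Measure.pi
            (fun _ : Fin n =>
              ((volume (Set.Icc (0 : Fin D → ℝ) (fun _ => l)))⁻¹.toNNReal •
                volume.restrict (Set.Icc (0 : Fin D → ℝ) (fun _ => l))))
            {x : Fin n → (Fin D → ℝ) |
              ∀ R ∈ 𝓡, t ≤ (({i : Fin n | x i ∈ R}).ncard : ℝ)} :=
  statement1_general D k hk c A hc
end

section
/- Let D ≥ 1 and k ≥ 1 be integers and let c, A > 0 be reals. There exists N such that for all n ≥ N the following holds. Let l > 0, let C = [0,l]^D, and let 𝓕 be a finite family of Borel subsets of C with |𝓕| ≤ A·n^{2k} such that every F ∈ 𝓕 has Lebesgue measure at most c·l^D/(n·2^{√(log₂ n)}). If X₁, …, X_n are independent random points, each uniformly distributed on C, then with probability strictly greater than 1/2, for every F ∈ 𝓕 strictly fewer than 3k·√(log₂ n) of the points X₁, …, X_n lie in F. -/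
/-!
A union bound. For one set `F` of probability `p`, the chance that some `m` of the `n` points
all land in `F` is at most `C(n, m) p^m ≤ (n p)^m`. Here `n p ≤ c / 2^s` with `s = √(log₂ n)`
and `m = ⌈3 k s⌉`; since `n = 2^(s²)`,
`(c / 2^s)^(3ks) = n^(-2k) (c / 2^(s/3))^(3ks) ≤ n^(-2k) c / 2^(s/3)` once `c ≤ 2^(s/3)`.
Summing over at most `A n^(2k)` sets leaves `A c / 2^(s/3)`, which tends to `0`.
-/

open MeasureTheory ProbabilityTheory Filter Set Real
open scoped ENNReal Topology

section Hits

variable {α : Type*} [MeasurableSpace α] (ν : Measure α) [IsProbabilityMeasure ν]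

lemma measure_pi_finset_pi_const {ι : Type*} [Fintype ι] (S : Finset ι) (F : Set α) :
    Measure.pi (fun _ : ι => ν) ((S : Set ι).pi fun _ => F) = ν F ^ S.card := by
  classical
  rw [← pi_univ_ite, Measure.pi_pi]
  simp only [apply_ite, measure_univ, Finset.mem_coe, Finset.prod_ite_mem, Finset.univ_inter,
    Finset.prod_const]

lemma measure_pi_le_ncard_le_choose_mul_pow (n m : ℕ) (F : Set α) :
    Measure.pi (fun _ : Fin n => ν) {x | m ≤ {i | x i ∈ F}.ncard} ≤ n.choose m * ν F ^ m := by
  have hcover : {x : Fin n → α | m ≤ {i | x i ∈ F}.ncard} ⊆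
      ⋃ S ∈ (Finset.univ : Finset (Fin n)).powersetCard m, (S : Set (Fin n)).pi fun _ => F := by
    classical
    intro x hx
    rw [mem_ofPred_eq, ncard_eq_toFinset_card'] at hx
    obtain ⟨S, hS, hcard⟩ := Finset.exists_subset_card_eq hx
    simp only [mem_iUnion, Finset.mem_powersetCard_univ, exists_prop]
    exact ⟨S, hcard, fun i hi => by simpa using hS hi⟩
  calc _ ≤ _ := measure_mono hcover
    _ ≤ ∑ S ∈ (Finset.univ : Finset (Fin n)).powersetCard m,
          Measure.pi (fun _ : Fin n => ν) ((S : Set (Fin n)).pi fun _ => F) :=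
        measure_biUnion_finset_le _ _
    _ = ∑ S ∈ (Finset.univ : Finset (Fin n)).powersetCard m, ν F ^ m :=
        Finset.sum_congr rfl fun S hS => by
          rw [measure_pi_finset_pi_const, Finset.mem_powersetCard_univ.mp hS]
    _ = n.choose m * ν F ^ m := by simp

lemma half_lt_measure_of_measure_compl_lt_half {s : Set α}
    (h : ν sᶜ < 1 / 2) : 1 / 2 < ν s := by
  by_contra! hs
  have hle := measure_univ_le_add_compl (μ := ν) s
  rw [measure_univ] at hle
  have hlt := ENNReal.add_lt_add_of_le_of_lt (ne_top_of_le_ne_top (by norm_num) hs) hs h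
  rw [ENNReal.add_halves] at hlt
  exact (hle.trans_lt hlt).false

lemma half_lt_measure_pi_forall_ncard_lt {n m : ℕ} {𝓕 : Finset (Set α)} {p : ℝ≥0∞}
    (hp : ∀ F ∈ 𝓕, ν F ≤ p) (h : 𝓕.card * (n * p) ^ m < 1 / 2) :
    1 / 2 < Measure.pi (fun _ : Fin n => ν) {x | ∀ F ∈ 𝓕, {i | x i ∈ F}.ncard < m} := by
  apply half_lt_measure_of_measure_compl_lt_half
  have hcompl : {x : Fin n → α | ∀ F ∈ 𝓕, {i | x i ∈ F}.ncard < m}ᶜ =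
      ⋃ F ∈ 𝓕, {x | m ≤ {i | x i ∈ F}.ncard} := by
    ext x; simp
  have hchoose : (n.choose m : ℝ≥0∞) ≤ n ^ m := by exact_mod_cast Nat.choose_le_pow n m
  calc _ = _ := congrArg _ hcompl
    _ ≤ ∑ F ∈ 𝓕, Measure.pi (fun _ : Fin n => ν) {x | m ≤ {i | x i ∈ F}.ncard} :=
        measure_biUnion_finset_le _ _
    _ ≤ ∑ _F ∈ 𝓕, (n * p) ^ m := Finset.sum_le_sum fun F hF =>
        (measure_pi_le_ncard_le_choose_mul_pow ν n m F).trans <| by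
          rw [mul_pow]; gcongr; exact hp F hF
    _ = 𝓕.card * (n * p) ^ m := by simp
    _ < 1 / 2 := h

end Hits

lemma inv_toNNReal_smul_restrict_eq_cond {Ω : Type*} [MeasurableSpace Ω] {μ : Measure Ω}
    {s : Set Ω} (hs : μ s ≠ 0) : (μ s)⁻¹.toNNReal • μ.restrict s = μ[|s] := by
  rw [← Measure.coe_nnreal_smul, ENNReal.coe_toNNReal (ENNReal.inv_ne_top.mpr hs)]
  rfl

lemma volume_Icc_zero_const {D : ℕ} {l : ℝ} (hl : 0 ≤ l) :
    volume (Icc (0 : Fin D → ℝ) fun _ => l) = ENNReal.ofReal (l ^ D) := by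
  simp [Real.volume_Icc_pi, ENNReal.ofReal_pow hl]

lemma cond_volume_Icc_le_of_volume_le {D : ℕ} {l c d : ℝ} (hl : 0 < l) {F : Set (Fin D → ℝ)}
    (hF : F ⊆ Icc 0 fun _ => l) (hvol : volume F ≤ ENNReal.ofReal (c * l ^ D / d)) :
    volume[|Icc (0 : Fin D → ℝ) fun _ => l] F ≤ ENNReal.ofReal (c / d) := by
  rw [cond_apply measurableSet_Icc, inter_eq_self_of_subset_right hF, volume_Icc_zero_const hl.le,
    ← ENNReal.ofReal_inv_of_pos (by positivity)]
  calc _ ≤ ENNReal.ofReal (l ^ D)⁻¹ * ENNReal.ofReal (c * l ^ D / d) := by gcongr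
    _ = _ := by rw [← ENNReal.ofReal_mul (by positivity)]; congr 1; field_simp

lemma pow_mul_div_rpow_pow_ceil_le {k : ℕ} (hk : 1 ≤ k) {n c : ℝ} (hn : 2 ≤ n) (hc : 0 < c)
    (hc' : c ≤ 2 ^ (√(logb 2 n) / 3)) :
    n ^ (2 * k) * (c / 2 ^ √(logb 2 n)) ^ ⌈3 * k * √(logb 2 n)⌉₊ ≤ c / 2 ^ (√(logb 2 n) / 3) := by
  set s := √(logb 2 n)
  have hlog : 1 ≤ logb 2 n := by
    simpa using logb_le_logb_of_le (b := 2) one_lt_two (by norm_num) hn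
  have hs : 1 ≤ s := one_le_sqrt.mpr hlog
  have hn_eq : n = 2 ^ (s ^ 2) := by
    rw [sq_sqrt (by linarith), rpow_logb two_pos (by norm_num) (by linarith)]
  set y := c / 2 ^ (s / 3)
  have hy0 : 0 < y := by positivity
  have hy1 : y ≤ 1 := div_le_one_of_le₀ hc' (by positivity)
  have hx : c / 2 ^ s = y / 2 ^ (2 * s / 3) := by
    rw [div_div, ← rpow_add two_pos]; ring_nf
  have hx0 : 0 < c / 2 ^ s := by positivity
  have hx1 : c / 2 ^ s ≤ 1 := by
    rw [hx]
    exact div_le_one_of_le₀ (hy1.trans (one_le_rpow one_le_two (by positivity))) (by positivity)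
  have hk' : (1 : ℝ) ≤ k := by exact_mod_cast hk
  have hpow_eq : n ^ (2 * k) * (c / 2 ^ s) ^ (3 * k * s) = y ^ (3 * k * s) := by
    rw [hx, div_rpow hy0.le (by positivity), ← rpow_mul zero_le_two, hn_eq,
      ← rpow_mul_natCast zero_le_two]
    have hexp : 2 * s / 3 * (3 * k * s) = s ^ 2 * ↑(2 * k) := by push_cast; ring
    have : (0 : ℝ) < 2 ^ (s ^ 2 * ↑(2 * k)) := by positivity
    rw [hexp]
    field_simp
  calc n ^ (2 * k) * (c / 2 ^ s) ^ ⌈3 * k * s⌉₊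
      ≤ n ^ (2 * k) * (c / 2 ^ s) ^ (3 * k * s) := by
        rw [← rpow_natCast (c / 2 ^ s)]
        exact mul_le_mul_of_nonneg_left
          (rpow_le_rpow_of_exponent_ge hx0 hx1 (Nat.le_ceil _)) (by positivity)
    _ = y ^ (3 * k * s) := hpow_eq
    _ ≤ y ^ (1 : ℝ) := rpow_le_rpow_of_exponent_ge hy0 hy1 (by nlinarith)
    _ = y := rpow_one y

lemma tendsto_div_two_rpow_sqrt_logb (c : ℝ) :
    Tendsto (fun n : ℕ => c / 2 ^ (√(logb 2 n) / 3)) atTop (𝓝 0) :=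
  tendsto_const_nhds.div_atTop <| (tendsto_rpow_atTop_of_base_gt_one 2 one_lt_two).comp <|
    (tendsto_sqrt_atTop.comp <| (tendsto_logb_atTop one_lt_two).comp
      tendsto_natCast_atTop_atTop).atTop_div_const three_pos

theorem statement2_general (D k : ℕ) (hk : 1 ≤ k) (c A : ℝ)
    (hc : 0 < c) :
    ∃ N : ℕ, ∀ n : ℕ, N ≤ n →
      ∀ l : ℝ, 0 < l →
      ∀ 𝓕 : Finset (Set (Fin D → ℝ)),
        (𝓕.card : ℝ) ≤ A * (n : ℝ) ^ (2 * k) →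
        (∀ F ∈ 𝓕, MeasurableSet F) →
        (∀ F ∈ 𝓕, F ⊆ Set.Icc (0 : Fin D → ℝ) (fun _ => l)) →
        (∀ F ∈ 𝓕,
          volume F ≤
            ENNReal.ofReal (c * l ^ D / (n * 2 ^ Real.sqrt (Real.logb 2 n)))) →
        (1 : ENNReal) / 2 <
          Measure.pi
            (fun _ : Fin n =>
              ((volume (Set.Icc (0 : Fin D → ℝ) (fun _ => l)))⁻¹.toNNReal •
                volume.restrict (Set.Icc (0 : Fin D → ℝ) (fun _ => l))))
            {x : Fin n → (Fin D → ℝ) |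
              ∀ F ∈ 𝓕,
                (({i : Fin n | x i ∈ F}).ncard : ℝ) <
                  3 * k * Real.sqrt (Real.logb 2 n)} := by
  have hy := tendsto_div_two_rpow_sqrt_logb c
  obtain ⟨N, hN⟩ := eventually_atTop.mp <| (eventually_ge_atTop 2).and <|
    (hy.eventually (eventually_le_nhds one_pos)).and
      ((hy.const_mul A).eventually (eventually_lt_nhds (by norm_num : A * 0 < 1 / 2)))
  refine ⟨N, fun n hn l hl 𝓕 hcard _ hsub hvol => ?_⟩
  obtain ⟨hn2, hy1, hyA⟩ := hN n hn
  set s := √(logb 2 n)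
  have hn2' : (2 : ℝ) ≤ n := by exact_mod_cast hn2
  have hC := volume_Icc_zero_const (D := D) hl.le
  have hC0 : volume (Icc (0 : Fin D → ℝ) fun _ => l) ≠ 0 := by rw [hC]; simp; positivity
  have : IsProbabilityMeasure (volume[|Icc (0 : Fin D → ℝ) fun _ => l]) :=
    cond_isProbabilityMeasure_of_finite hC0 (by simp [hC])
  simp_rw [inv_toNNReal_smul_restrict_eq_cond hC0, ← Nat.lt_ceil]
  refine half_lt_measure_pi_forall_ncard_lt _
    (fun F hF => cond_volume_Icc_le_of_volume_le hl (hsub F hF) (hvol F hF)) ?_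
  have hA : 0 ≤ A := nonneg_of_mul_nonneg_left ((Nat.cast_nonneg _).trans hcard) (by positivity)
  have hnp : (n : ℝ≥0∞) * ENNReal.ofReal (c / (n * 2 ^ s)) = ENNReal.ofReal (c / 2 ^ s) := by
    rw [← ENNReal.ofReal_natCast, ← ENNReal.ofReal_mul (by positivity)]; congr 1; field_simp
  calc _ ≤ ENNReal.ofReal (A * n ^ (2 * k)) * ENNReal.ofReal (c / 2 ^ s) ^ ⌈3 * k * s⌉₊ := by
        rw [hnp, ← ENNReal.ofReal_natCast]; gcongr
    _ = ENNReal.ofReal (A * (n ^ (2 * k) * (c / 2 ^ s) ^ ⌈3 * k * s⌉₊)) := by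
        rw [← ENNReal.ofReal_pow (by positivity), ← ENNReal.ofReal_mul (by positivity), mul_assoc]
    _ ≤ ENNReal.ofReal (A * (c / 2 ^ (s / 3))) := by
        gcongr
        exact pow_mul_div_rpow_pow_ceil_le hk hn2' hc ((div_le_one (by positivity)).mp hy1)
    _ < 1 / 2 := by
        rw [one_div, ← ENNReal.ofReal_ofNat 2, ← ENNReal.ofReal_inv_of_pos two_pos]
        exact (ENNReal.ofReal_lt_ofReal_iff (by norm_num)).mpr (by linarith)

/-- Derandomization lemma for intersections: if every set in a not-too-large family
`𝓕` of subsets of the cube `C = [0,l]^D` has Lebesgue measure at most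
`c·l^D/(n·2^(√(log₂ n)))`, then `n` independent uniformly random points in `C` hit
every set of `𝓕` strictly fewer than `3k·√(log₂ n)` times with probability greater
than `1/2`. The `n` independent uniform points are modeled by the `n`-fold product of
the normalized restriction of Lebesgue measure to `C`. -/
theorem statement2 (D k : ℕ) (hD : 1 ≤ D) (hk : 1 ≤ k) (c A : ℝ)
    (hc : 0 < c) (hA : 0 < A) :
    ∃ N : ℕ, ∀ n : ℕ, N ≤ n →
      ∀ l : ℝ, 0 < l →
      ∀ 𝓕 : Finset (Set (Fin D → ℝ)),
        (𝓕.card : ℝ) ≤ A * (n : ℝ) ^ (2 * k) →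
        (∀ F ∈ 𝓕, MeasurableSet F) →
        (∀ F ∈ 𝓕, F ⊆ Set.Icc (0 : Fin D → ℝ) (fun _ => l)) →
        (∀ F ∈ 𝓕,
          volume F ≤
            ENNReal.ofReal (c * l ^ D / (n * 2 ^ Real.sqrt (Real.logb 2 n)))) →
        (1 : ENNReal) / 2 <
          Measure.pi
            (fun _ : Fin n =>
              ((volume (Set.Icc (0 : Fin D → ℝ) (fun _ => l)))⁻¹.toNNReal •
                volume.restrict (Set.Icc (0 : Fin D → ℝ) (fun _ => l))))
            {x : Fin n → (Fin D → ℝ) |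
              ∀ F ∈ 𝓕,
                (({i : Fin n | x i ∈ F}).ncard : ℝ) <
                  3 * k * Real.sqrt (Real.logb 2 n)} :=
  statement2_general D k hk c A hc
end

section
/- Let Δ, D ≥ 2 be integers and let P(X₁, …, X_D) = X₁ − X₂^Δ + Σ_m A_m X₁^{m₁}·X₂^{m₂}···X_D^{m_D}, where the sum ranges over multi-indices m of total degree at most Δ and the coefficients satisfy 0 ≤ A_m ≤ 1. Then there exists a constant K > 0 depending only on Δ and D such that the following holds: for every (x₂, …, x_D) ∈ [1,2]^{D−1}, every p₁ ≥ 0 with P(p₁, x₂, …, x_D) = 0, every r ∈ [0,1], and every γ ≥ 0 with P(p₁ + γ, x₂, …, x_D) = r, one has r/K ≤ γ ≤ r. -/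
/-!
Write `P(t, x') = t - x₂^Δ + S(t)`, where `S(t) = Σ_m c_m t^{m₁}` has coefficients
`0 ≤ c_m ≤ 2^{Δ(D-1)}` once `x' ∈ [1,2]^{D-1}` is fixed. Then
`r = P(p₁ + γ) - P(p₁) = γ + (S(p₁ + γ) - S(p₁))`. Since `S` is nondecreasing on `[0, ∞)`,
this gives `γ ≤ r`. Since `S ≥ 0`, the root satisfies `p₁ ≤ x₂^Δ ≤ 2^Δ`, so `p₁` and `p₁ + γ`
lie in `[0, 2^Δ + 1]`, where `S` is Lipschitz with a constant `L` depending only on `Δ` and `D`;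
hence `r ≤ (1 + L) γ`.
-/

open Finset

/-- The value at `x ∈ ℝ^(d+2)` of the `D`-variate polynomial
`P(X₁,…,X_D) = X₁ − X₂^Δ + Σ_m A_m X₁^{m₁}···X_D^{m_D}`, where the sum ranges over
multi-indices `m` of total degree at most `Δ` (every such multi-index has all
entries at most `Δ`, hence is encoded as an element of `Fin (d+2) → Fin (Δ+1)`). -/
def packedVal (Δ d : ℕ) (A : (Fin (d + 2) → Fin (Δ + 1)) → ℝ)
    (x : Fin (d + 2) → ℝ) : ℝ :=
  x 0 - (x 1) ^ Δ +
    ∑ m : Fin (d + 2) → Fin (Δ + 1),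
      if (∑ i, (m i : ℕ)) ≤ Δ then A m * ∏ i, (x i) ^ (m i : ℕ) else 0

lemma pow_sub_pow_le_mul_sub {a b M : ℝ} {k n : ℕ} (ha : 0 ≤ a) (hab : a ≤ b) (hbM : b ≤ M)
    (hM : 1 ≤ M) (hk : k ≤ n) : b ^ k - a ^ k ≤ n * M ^ n * (b - a) := by
  have hb : 0 ≤ b := ha.trans hab
  calc b ^ k - a ^ k ≤ |b ^ k - a ^ k| := le_abs_self _
    _ ≤ |b - a| * k * max |b| |a| ^ (k - 1) := abs_pow_sub_pow_le b a k
    _ = (b - a) * k * b ^ (k - 1) := by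
      rw [abs_of_nonneg (sub_nonneg.2 hab), abs_of_nonneg ha, abs_of_nonneg hb,
        max_eq_left hab]
    _ ≤ (b - a) * n * M ^ n := by
      have hpow : b ^ (k - 1) ≤ M ^ n :=
        (pow_le_pow_left₀ hb hbM _).trans (pow_le_pow_right₀ hM (by omega))
      gcongr
    _ = n * M ^ n * (b - a) := by ring

section SumMulPow

variable {ι : Type*} (s : Finset ι) {c : ι → ℝ} {k : ι → ℕ} {a b : ℝ}

lemma sum_mul_pow_le_sum_mul_pow (hc : ∀ i ∈ s, 0 ≤ c i) (ha : 0 ≤ a) (hab : a ≤ b) :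
    ∑ i ∈ s, c i * a ^ k i ≤ ∑ i ∈ s, c i * b ^ k i := by
  gcongr with i hi
  exact hc i hi

lemma sum_mul_pow_sub_sum_mul_pow_le {C M : ℝ} {n : ℕ} (hc : ∀ i ∈ s, 0 ≤ c i)
    (hcC : ∀ i ∈ s, c i ≤ C) (hk : ∀ i ∈ s, k i ≤ n) (hM : 1 ≤ M)
    (ha : 0 ≤ a) (hab : a ≤ b) (hbM : b ≤ M) :
    ∑ i ∈ s, c i * b ^ k i - ∑ i ∈ s, c i * a ^ k i ≤ #s * C * n * M ^ n * (b - a) := by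
  rw [← sum_sub_distrib]
  calc ∑ i ∈ s, (c i * b ^ k i - c i * a ^ k i) ≤ ∑ _i ∈ s, C * (n * M ^ n * (b - a)) := by
        refine sum_le_sum fun i hi => ?_
        rw [← mul_sub]
        have hpow : a ^ k i ≤ b ^ k i := pow_le_pow_left₀ ha hab _
        exact mul_le_mul (hcC i hi) (pow_sub_pow_le_mul_sub ha hab hbM hM (hk i hi))
          (sub_nonneg.2 hpow) ((hc i hi).trans (hcC i hi))
    _ = #s * C * n * M ^ n * (b - a) := by rw [sum_const, nsmul_eq_mul]; ring

end SumMulPow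

noncomputable def sectionCoeff (Δ d : ℕ) (A : (Fin (d + 2) → Fin (Δ + 1)) → ℝ)
    (x : Fin (d + 2) → ℝ) (m : Fin (d + 2) → Fin (Δ + 1)) : ℝ :=
  if (∑ i, (m i : ℕ)) ≤ Δ then A m * ∏ j ∈ univ.erase 0, x j ^ (m j : ℕ) else 0

lemma packedVal_update_zero (Δ d : ℕ) (A : (Fin (d + 2) → Fin (Δ + 1)) → ℝ)
    (x : Fin (d + 2) → ℝ) (t : ℝ) :
    packedVal Δ d A (Function.update x 0 t) =
      t - x 1 ^ Δ + ∑ m, sectionCoeff Δ d A x m * t ^ (m 0 : ℕ) := by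
  unfold packedVal sectionCoeff
  rw [Function.update_self, Function.update_of_ne (by simp)]
  congr 1
  refine sum_congr rfl fun m _ => ?_
  have hprod : ∏ i, Function.update x 0 t i ^ (m i : ℕ) =
      t ^ (m 0 : ℕ) * ∏ j ∈ univ.erase 0, x j ^ (m j : ℕ) := by
    rw [← mul_prod_erase univ _ (mem_univ 0), Function.update_self]
    exact congrArg _ (prod_congr rfl fun j hj => by
      rw [Function.update_of_ne (ne_of_mem_erase hj)])
  rw [hprod]
  split_ifs <;> ring

section Coefficients

variable {Δ d : ℕ} {A : (Fin (d + 2) → Fin (Δ + 1)) → ℝ} {x : Fin (d + 2) → ℝ}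

lemma sectionCoeff_nonneg (hA : ∀ m, 0 ≤ A m) (hx : ∀ i, i ≠ 0 → x i ∈ Set.Icc (1 : ℝ) 2)
    (m : Fin (d + 2) → Fin (Δ + 1)) : 0 ≤ sectionCoeff Δ d A x m := by
  unfold sectionCoeff
  split_ifs
  · exact mul_nonneg (hA m) (prod_nonneg fun j hj =>
      pow_nonneg (zero_le_one.trans (hx j (ne_of_mem_erase hj)).1) _)
  · exact le_rfl

lemma sectionCoeff_le (hA : ∀ m, A m ≤ 1) (hx : ∀ i, i ≠ 0 → x i ∈ Set.Icc (1 : ℝ) 2)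
    (m : Fin (d + 2) → Fin (Δ + 1)) : sectionCoeff Δ d A x m ≤ (2 ^ Δ) ^ (d + 1) := by
  unfold sectionCoeff
  split_ifs
  · have hx₀ : ∀ j ∈ univ.erase 0, 0 ≤ x j := fun j hj =>
      zero_le_one.trans (hx j (ne_of_mem_erase hj)).1
    have hprod : ∏ j ∈ univ.erase 0, x j ^ (m j : ℕ) ≤
        ∏ _j ∈ univ.erase (0 : Fin (d + 2)), (2 : ℝ) ^ Δ :=
      prod_le_prod (fun j hj => pow_nonneg (hx₀ j hj) _) fun j hj =>
        (pow_le_pow_left₀ (hx₀ j hj) (hx j (ne_of_mem_erase hj)).2 _).trans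
          (pow_le_pow_right₀ one_le_two (Fin.is_le _))
    calc A m * ∏ j ∈ univ.erase 0, x j ^ (m j : ℕ)
        ≤ 1 * ∏ _j ∈ univ.erase (0 : Fin (d + 2)), (2 : ℝ) ^ Δ :=
          mul_le_mul (hA m) hprod (prod_nonneg fun j hj => pow_nonneg (hx₀ j hj) _) zero_le_one
      _ = (2 ^ Δ) ^ (d + 1) := by simp
  · positivity

end Coefficients

theorem statement6_general (Δ d : ℕ) :
    ∃ K : ℝ, 0 < K ∧
      ∀ A : (Fin (d + 2) → Fin (Δ + 1)) → ℝ,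
        (∀ m, 0 ≤ A m ∧ A m ≤ 1) →
        ∀ x : Fin (d + 2) → ℝ,
          (∀ i, i ≠ 0 → x i ∈ Set.Icc (1 : ℝ) 2) →
          ∀ p₁ : ℝ, 0 ≤ p₁ →
            packedVal Δ d A (Function.update x 0 p₁) = 0 →
            ∀ r ∈ Set.Icc (0 : ℝ) 1, ∀ γ : ℝ, 0 ≤ γ →
              packedVal Δ d A (Function.update x 0 (p₁ + γ)) = r →
              r / K ≤ γ ∧ γ ≤ r := by
  set M : ℝ := 2 ^ Δ + 1
  have hM : 1 ≤ M := le_add_of_nonneg_left (by positivity)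
  set L : ℝ := #(univ : Finset (Fin (d + 2) → Fin (Δ + 1))) * (2 ^ Δ) ^ (d + 1) * Δ * M ^ Δ
  refine ⟨1 + L, by positivity, fun A hA x hx p₁ hp₁ hroot r hr γ hγ hval => ?_⟩
  rw [packedVal_update_zero] at hroot hval
  have hcoeff := fun m (_ : m ∈ univ) => sectionCoeff_nonneg (fun m => (hA m).1) hx m
  have hmono := sum_mul_pow_le_sum_mul_pow univ (k := fun m => (m 0 : ℕ)) hcoeff hp₁
    (le_add_of_nonneg_right hγ)
  have hγr : γ ≤ r := by linarith
  have hS : 0 ≤ ∑ m, sectionCoeff Δ d A x m * p₁ ^ (m 0 : ℕ) :=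
    sum_nonneg fun m hm => mul_nonneg (hcoeff m hm) (pow_nonneg hp₁ _)
  have hx₁ : x 1 ^ Δ ≤ 2 ^ Δ :=
    pow_le_pow_left₀ (zero_le_one.trans (hx 1 one_ne_zero).1) (hx 1 one_ne_zero).2 Δ
  have hlip := sum_mul_pow_sub_sum_mul_pow_le univ hcoeff
    (fun m _ => sectionCoeff_le (fun m => (hA m).2) hx m)
    (fun m _ => Fin.is_le (m 0)) hM hp₁ (le_add_of_nonneg_right hγ)
    (show p₁ + γ ≤ M by linarith [hr.2])
  refine ⟨(div_le_iff₀ (by positivity)).2 ?_, hγr⟩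
  linarith

/-- Lemma `slabwidth`: there is a constant `K > 0`, depending only on `Δ` and the
dimension `D = d+2`, such that for every packed polynomial with coefficients in
`[0,1]`, every `(x₂,…,x_D) ∈ [1,2]^{D−1}`, every root `p₁ ≥ 0` of `P(·, x₂,…,x_D)`,
every `r ∈ [0,1]` and every `γ ≥ 0` with `P(p₁+γ, x₂,…,x_D) = r`, one has
`r/K ≤ γ ≤ r`. -/
theorem statement6 (Δ d : ℕ) (hΔ : 2 ≤ Δ) :
    ∃ K : ℝ, 0 < K ∧
      ∀ A : (Fin (d + 2) → Fin (Δ + 1)) → ℝ,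
        (∀ m, 0 ≤ A m ∧ A m ≤ 1) →
        ∀ x : Fin (d + 2) → ℝ,
          (∀ i, i ≠ 0 → x i ∈ Set.Icc (1 : ℝ) 2) →
          ∀ p₁ : ℝ, 0 ≤ p₁ →
            packedVal Δ d A (Function.update x 0 p₁) = 0 →
            ∀ r ∈ Set.Icc (0 : ℝ) 1, ∀ γ : ℝ, 0 ≤ γ →
              packedVal Δ d A (Function.update x 0 (p₁ + γ)) = r →
              r / K ≤ γ ∧ γ ≤ r :=
  statement6_general Δ d
end

section
/- Let Δ ≥ 2 be an integer, let 0 ≤ ε ≤ 1, and let P(x,y) = x − y^Δ + Σ_{i+j ≤ Δ} c_{ij} x^i y^j with 0 ≤ c_{ij} ≤ ε for all i, j ≥ 0 with i + j ≤ Δ. If y ∈ [1,2], x > 0 and P(x,y) = 0, then y^Δ − (Δ+1)²·2^{Δ²+Δ}·ε ≤ x ≤ y^Δ. -/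
/-!
Write `S = Σ_{i+j≤Δ} c_{ij} xⁱ yʲ`, so that `P(x,y) = 0` reads `x = y^Δ - S`. Every term of `S` is
nonnegative, which gives `x ≤ y^Δ ≤ 2^Δ`. Then each monomial satisfies
`xⁱ yʲ ≤ 2^(Δi) 2^j ≤ 2^(Δ²+Δ)`, and `S` has at most `(Δ+1)²` terms, each at most `ε 2^(Δ²+Δ)`.
-/

open Finset

lemma add_le_of_mem_range_of_mem_range_sub {n i j : ℕ} (hi : i ∈ range (n + 1))
    (hj : j ∈ range (n + 1 - i)) : i + j ≤ n := by
  rw [mem_range] at hi hj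
  omega

lemma sum_range_sum_range_sub_nonneg (n : ℕ) (f : ℕ → ℕ → ℝ)
    (hf : ∀ i j, i + j ≤ n → 0 ≤ f i j) :
    0 ≤ ∑ i ∈ range (n + 1), ∑ j ∈ range (n + 1 - i), f i j :=
  sum_nonneg fun _ hi ↦ sum_nonneg fun _ hj ↦
    hf _ _ (add_le_of_mem_range_of_mem_range_sub hi hj)

lemma sum_range_sum_range_sub_le (n : ℕ) (f : ℕ → ℕ → ℝ) {M : ℝ} (hM : 0 ≤ M)
    (hf : ∀ i j, i + j ≤ n → f i j ≤ M) :
    ∑ i ∈ range (n + 1), ∑ j ∈ range (n + 1 - i), f i j ≤ ((n : ℝ) + 1) ^ 2 * M := by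
  calc ∑ i ∈ range (n + 1), ∑ j ∈ range (n + 1 - i), f i j
      ≤ ∑ i ∈ range (n + 1), ∑ j ∈ range (n + 1 - i), M :=
        sum_le_sum fun _ hi ↦ sum_le_sum fun _ hj ↦
          hf _ _ (add_le_of_mem_range_of_mem_range_sub hi hj)
    _ ≤ ∑ i ∈ range (n + 1), ∑ j ∈ range (n + 1), M :=
        sum_le_sum fun _ _ ↦
          sum_le_sum_of_subset_of_nonneg (range_subset_range.2 (Nat.sub_le _ _))
            fun _ _ _ ↦ hM
    _ = ((n : ℝ) + 1) ^ 2 * M := by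
        simp only [sum_const, card_range, nsmul_eq_mul]
        push_cast
        ring

lemma pow_mul_pow_le_two_pow {n i j : ℕ} {x y : ℝ} (hx0 : 0 ≤ x) (hx : x ≤ 2 ^ n)
    (hy0 : 0 ≤ y) (hy : y ≤ 2) (hij : i + j ≤ n) :
    x ^ i * y ^ j ≤ 2 ^ (n ^ 2 + n) := by
  have hxi : x ^ i ≤ 2 ^ (n ^ 2) :=
    calc x ^ i ≤ ((2 : ℝ) ^ n) ^ i := pow_le_pow_left₀ hx0 hx i
      _ = 2 ^ (n * i) := (pow_mul _ _ _).symm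
      _ ≤ 2 ^ (n ^ 2) :=
          pow_le_pow_right₀ (by norm_num) (by rw [sq]; exact Nat.mul_le_mul_left n (by omega))
  have hyj : y ^ j ≤ 2 ^ n :=
    calc y ^ j ≤ (2 : ℝ) ^ j := pow_le_pow_left₀ hy0 hy j
      _ ≤ 2 ^ n := pow_le_pow_right₀ (by norm_num) (by omega)
  rw [pow_add]
  exact mul_le_mul hxi hyj (by positivity) (by positivity)

theorem statement7_general (Δ : ℕ) (ε : ℝ) (hε0 : 0 ≤ ε)
    (c : ℕ → ℕ → ℝ) (hc : ∀ i j, i + j ≤ Δ → 0 ≤ c i j ∧ c i j ≤ ε)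
    (x y : ℝ) (hy : y ∈ Set.Icc (1 : ℝ) 2) (hx : 0 < x)
    (hP : x - y ^ Δ +
        ∑ i ∈ Finset.range (Δ + 1), ∑ j ∈ Finset.range (Δ + 1 - i),
          c i j * x ^ i * y ^ j = 0) :
    y ^ Δ - ((Δ : ℝ) + 1) ^ 2 * 2 ^ (Δ ^ 2 + Δ) * ε ≤ x ∧ x ≤ y ^ Δ := by
  obtain ⟨hy1, hy2⟩ := hy
  have hy0 : 0 ≤ y := by linarith
  have hS_nonneg := sum_range_sum_range_sub_nonneg Δ (fun i j ↦ c i j * x ^ i * y ^ j)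
    fun i j hij ↦ by have := (hc i j hij).1; positivity
  have hx_le : x ≤ y ^ Δ := by linarith
  have hx_le_two_pow : x ≤ 2 ^ Δ := hx_le.trans (pow_le_pow_left₀ hy0 hy2 Δ)
  have hS_le := sum_range_sum_range_sub_le Δ (fun i j ↦ c i j * x ^ i * y ^ j)
    (M := ε * 2 ^ (Δ ^ 2 + Δ)) (by positivity) fun i j hij ↦ by
      rw [mul_assoc]
      exact mul_le_mul (hc i j hij).2 (pow_mul_pow_le_two_pow hx.le hx_le_two_pow hy0 hy2 hij)
        (by positivity) hε0
  exact ⟨by linarith, hx_le⟩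

/-- For a packed bivariate polynomial
`P(x,y) = x − y^Δ + Σ_{i+j≤Δ} c_{ij} x^i y^j` with `0 ≤ c_{ij} ≤ ε`:
if `y ∈ [1,2]`, `x > 0` and `P(x,y) = 0`, then
`y^Δ − (Δ+1)²·2^(Δ²+Δ)·ε ≤ x ≤ y^Δ`. -/
theorem statement7 (Δ : ℕ) (hΔ : 2 ≤ Δ) (ε : ℝ) (hε0 : 0 ≤ ε) (hε1 : ε ≤ 1)
    (c : ℕ → ℕ → ℝ) (hc : ∀ i j, i + j ≤ Δ → 0 ≤ c i j ∧ c i j ≤ ε)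
    (x y : ℝ) (hy : y ∈ Set.Icc (1 : ℝ) 2) (hx : 0 < x)
    (hP : x - y ^ Δ +
        ∑ i ∈ Finset.range (Δ + 1), ∑ j ∈ Finset.range (Δ + 1 - i),
          c i j * x ^ i * y ^ j = 0) :
    y ^ Δ - ((Δ : ℝ) + 1) ^ 2 * 2 ^ (Δ ^ 2 + Δ) * ε ≤ x ∧ x ≤ y ^ Δ :=
  statement7_general Δ ε hε0 c hc x y hy hx hP
end

section
/- Let Δ ≥ 2 be an integer and set C = (Δ+1)²·2^{Δ²+Δ}. Let 0 < ε ≤ 1/(2C) and let P(x,y) = x − y^Δ + Σ_{i+j ≤ Δ} c_{ij} x^i y^j with 0 ≤ c_{ij} ≤ ε for all i, j. Then for every y in the interval I = [(1 + Cε)^{1/Δ}, 2^{1/Δ}] there exists a unique x > 0 with P(x,y) = 0, and this x lies in [1,2]; moreover the interval I has length at least 2^{1/Δ} − (3/2)^{1/Δ} > 0. -/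
/-!
For fixed `y ≥ 0` the map `x ↦ P(x, y)` is continuous and strictly increasing on `x > 0`,
because `x` is strictly increasing and every other `x`-dependent term has a nonnegative
coefficient. On `[0, 2]²` the perturbation `Σ c_{ij} x^i y^j` lies in `[0, (Δ+1)² 2^Δ ε]`,
so `P(2, y) ≥ 2 - y^Δ ≥ 0` and `P(1, y) ≤ 1 - y^Δ + (Δ+1)² 2^Δ ε ≤ 0` once
`1 + (Δ+1)² 2^Δ ε ≤ y^Δ ≤ 2`; the intermediate value theorem then gives the unique positive
root, in `[1, 2]`. The range of `y` is the `Δ`-th root of that condition, and `Cε ≤ 1/2`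
keeps it at least as long as `[(3/2)^(1/Δ), 2^(1/Δ)]`.
-/

open Finset Set

lemma Real.rpow_one_div_le_iff_le_pow {a y : ℝ} {n : ℕ} (hn : n ≠ 0) (ha : 0 ≤ a) (hy : 0 ≤ y) :
    a ^ (1 / (n : ℝ)) ≤ y ↔ a ≤ y ^ n := by
  rw [one_div, Real.rpow_inv_le_iff_of_pos ha hy (by positivity), Real.rpow_natCast]

lemma Real.le_rpow_one_div_iff_pow_le {b y : ℝ} {n : ℕ} (hn : n ≠ 0) (hy : 0 ≤ y) (hb : 0 ≤ b) :
    y ≤ b ^ (1 / (n : ℝ)) ↔ y ^ n ≤ b := by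
  rw [one_div, Real.le_rpow_inv_iff_of_pos hy hb (by positivity), Real.rpow_natCast]

lemma existsUnique_pos_root_of_strictMonoOn {f : ℝ → ℝ} (hf : ContinuousOn f (Icc 1 2))
    (hmono : StrictMonoOn f (Ioi 0)) (h1 : f 1 ≤ 0) (h2 : 0 ≤ f 2) :
    (∃! x, 0 < x ∧ f x = 0) ∧ ∀ x, 0 < x → f x = 0 → x ∈ Icc (1 : ℝ) 2 := by
  obtain ⟨x₀, hx₀, hfx₀⟩ := intermediate_value_Icc (by norm_num : (1 : ℝ) ≤ 2) hf ⟨h1, h2⟩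
  have hx₀pos : 0 < x₀ := one_pos.trans_le hx₀.1
  have huniq : ∀ x, 0 < x → f x = 0 → x = x₀ := fun x hx hfx =>
    hmono.injOn hx hx₀pos (hfx.trans hfx₀.symm)
  exact ⟨⟨x₀, ⟨hx₀pos, hfx₀⟩, fun x hx => huniq x hx.1 hx.2⟩,
    fun x hx hfx => huniq x hx hfx ▸ hx₀⟩

namespace PackedPoly

/-- `Σ_{i+j ≤ Δ} c_{ij} x^i y^j`, the part of a packed polynomial beyond `x - y^Δ`. -/
noncomputable def perturbation (Δ : ℕ) (c : ℕ → ℕ → ℝ) (x y : ℝ) : ℝ :=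
  ∑ i ∈ range (Δ + 1), ∑ j ∈ range (Δ + 1 - i), c i j * x ^ i * y ^ j

variable {Δ : ℕ} {c : ℕ → ℕ → ℝ}

lemma add_le_of_mem_range {i j : ℕ} (hi : i ∈ range (Δ + 1)) (hj : j ∈ range (Δ + 1 - i)) :
    i + j ≤ Δ := by
  simp only [Finset.mem_range] at hi hj
  omega

lemma perturbation_nonneg (hc : ∀ i j, i + j ≤ Δ → 0 ≤ c i j) {x y : ℝ} (hx : 0 ≤ x)
    (hy : 0 ≤ y) : 0 ≤ perturbation Δ c x y :=
  sum_nonneg fun _ hi => sum_nonneg fun _ hj => by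
    have := hc _ _ (add_le_of_mem_range hi hj)
    positivity

lemma monotoneOn_perturbation (hc : ∀ i j, i + j ≤ Δ → 0 ≤ c i j) {y : ℝ} (hy : 0 ≤ y) :
    MonotoneOn (fun x => perturbation Δ c x y) (Ici 0) := fun a ha b _ hab =>
  sum_le_sum fun _ hi => sum_le_sum fun _ hj => by
    have := hc _ _ (add_le_of_mem_range hi hj)
    gcongr

lemma continuous_perturbation (y : ℝ) : Continuous fun x => perturbation Δ c x y := by
  unfold perturbation
  fun_prop

lemma perturbation_le {ε : ℝ} (hc : ∀ i j, i + j ≤ Δ → 0 ≤ c i j ∧ c i j ≤ ε) {x y : ℝ}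
    (hx0 : 0 ≤ x) (hx2 : x ≤ 2) (hy0 : 0 ≤ y) (hy2 : y ≤ 2) :
    perturbation Δ c x y ≤ ((Δ : ℝ) + 1) ^ 2 * 2 ^ Δ * ε := by
  have hε : 0 ≤ ε := (hc 0 0 (Nat.zero_le _)).1.trans (hc 0 0 (Nat.zero_le _)).2
  have hterm : ∀ i ∈ range (Δ + 1), ∀ j ∈ range (Δ + 1 - i),
      c i j * x ^ i * y ^ j ≤ ε * 2 ^ Δ := by
    intro i hi j hj
    have hij := add_le_of_mem_range hi hj
    obtain ⟨hc0, hcε⟩ := hc i j hij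
    calc c i j * x ^ i * y ^ j = c i j * (x ^ i * y ^ j) := mul_assoc _ _ _
      _ ≤ ε * (2 ^ i * 2 ^ j) := by gcongr
      _ ≤ ε * 2 ^ Δ := by
        rw [← pow_add]
        gcongr
        norm_num
  calc perturbation Δ c x y
      ≤ ∑ i ∈ range (Δ + 1), ∑ _j ∈ range (Δ + 1 - i), ε * 2 ^ Δ :=
        sum_le_sum fun i hi => sum_le_sum (hterm i hi)
    _ ≤ ∑ _i ∈ range (Δ + 1), ∑ _j ∈ range (Δ + 1), ε * 2 ^ Δ :=
        sum_le_sum fun _ _ => sum_le_sum_of_subset_of_nonneg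
          (range_subset_range.2 (Nat.sub_le _ _)) fun _ _ _ => by positivity
    _ = ((Δ : ℝ) + 1) ^ 2 * 2 ^ Δ * ε := by
        simp only [sum_const, card_range, nsmul_eq_mul]
        push_cast
        ring

lemma strictMonoOn (hc : ∀ i j, i + j ≤ Δ → 0 ≤ c i j) {y : ℝ} (hy : 0 ≤ y) :
    StrictMonoOn (fun x => x - y ^ Δ + perturbation Δ c x y) (Ioi 0) := fun a ha b hb hab => by
  have := monotoneOn_perturbation hc hy (Ioi_subset_Ici_self ha) (Ioi_subset_Ici_self hb) hab.le
  simp only at this ⊢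
  linarith

theorem existsUnique_pos_root {ε : ℝ} (hc : ∀ i j, i + j ≤ Δ → 0 ≤ c i j ∧ c i j ≤ ε) {y : ℝ}
    (hy0 : 0 ≤ y) (hy2 : y ≤ 2) (hlow : 1 + ((Δ : ℝ) + 1) ^ 2 * 2 ^ Δ * ε ≤ y ^ Δ)
    (hhigh : y ^ Δ ≤ 2) :
    (∃! x, 0 < x ∧ x - y ^ Δ + perturbation Δ c x y = 0) ∧
      ∀ x, 0 < x → x - y ^ Δ + perturbation Δ c x y = 0 → x ∈ Icc (1 : ℝ) 2 := by
  have hc0 : ∀ i j, i + j ≤ Δ → 0 ≤ c i j := fun i j h => (hc i j h).1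
  refine existsUnique_pos_root_of_strictMonoOn
    ((continuous_id.sub continuous_const).add (continuous_perturbation y)).continuousOn
    (strictMonoOn hc0 hy0) ?_ ?_
  · have := perturbation_le hc zero_le_one one_le_two hy0 hy2
    linarith
  · have := perturbation_nonneg hc0 zero_le_two hy0
    linarith

end PackedPoly
/-- Lemma `curvelen`: let `C = (Δ+1)²·2^(Δ²+Δ)` and `0 < ε ≤ 1/(2C)`. For a packed
bivariate polynomial `P(x,y) = x − y^Δ + Σ_{i+j≤Δ} c_{ij} x^i y^j` with
`0 ≤ c_{ij} ≤ ε`, for every `y` in `I = [(1+Cε)^(1/Δ), 2^(1/Δ)]` there is a unique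
`x > 0` with `P(x,y) = 0`, and this `x` lies in `[1,2]`; moreover `I` has length at
least `2^(1/Δ) − (3/2)^(1/Δ) > 0`. -/
theorem statement8 (Δ : ℕ) (hΔ : 2 ≤ Δ) (ε : ℝ) (hε0 : 0 < ε)
    (hε1 : ε ≤ 1 / (2 * (((Δ : ℝ) + 1) ^ 2 * 2 ^ (Δ ^ 2 + Δ))))
    (c : ℕ → ℕ → ℝ) (hc : ∀ i j, i + j ≤ Δ → 0 ≤ c i j ∧ c i j ≤ ε) :
    (∀ y ∈ Set.Icc
        ((1 + ((Δ : ℝ) + 1) ^ 2 * 2 ^ (Δ ^ 2 + Δ) * ε) ^ (1 / (Δ : ℝ)))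
        ((2 : ℝ) ^ (1 / (Δ : ℝ))),
      (∃! x : ℝ, 0 < x ∧
          x - y ^ Δ +
            ∑ i ∈ Finset.range (Δ + 1), ∑ j ∈ Finset.range (Δ + 1 - i),
              c i j * x ^ i * y ^ j = 0) ∧
        (∀ x : ℝ, 0 < x →
          x - y ^ Δ +
            ∑ i ∈ Finset.range (Δ + 1), ∑ j ∈ Finset.range (Δ + 1 - i),
              c i j * x ^ i * y ^ j = 0 →
          x ∈ Set.Icc (1 : ℝ) 2)) ∧
      ((2 : ℝ) ^ (1 / (Δ : ℝ)) - (3 / 2 : ℝ) ^ (1 / (Δ : ℝ)) ≤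
        (2 : ℝ) ^ (1 / (Δ : ℝ)) -
          (1 + ((Δ : ℝ) + 1) ^ 2 * 2 ^ (Δ ^ 2 + Δ) * ε) ^ (1 / (Δ : ℝ))) ∧
      (0 < (2 : ℝ) ^ (1 / (Δ : ℝ)) - (3 / 2 : ℝ) ^ (1 / (Δ : ℝ))) := by
  have hΔ0 : Δ ≠ 0 := by omega
  set C : ℝ := ((Δ : ℝ) + 1) ^ 2 * 2 ^ (Δ ^ 2 + Δ)
  have hCε : C * ε ≤ 1 / 2 := by
    have := (le_div_iff₀ (by positivity)).1 hε1
    linarith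
  have hCε_nonneg : 0 ≤ C * ε := by positivity
  refine ⟨fun y hy => ?_, ?_, ?_⟩
  · have hy0 : 0 ≤ y := (Real.rpow_nonneg (by positivity) _).trans hy.1
    have hlow : 1 + C * ε ≤ y ^ Δ :=
      (Real.rpow_one_div_le_iff_le_pow hΔ0 (by positivity) hy0).1 hy.1
    have hhigh : y ^ Δ ≤ 2 := (Real.le_rpow_one_div_iff_pow_le hΔ0 hy0 zero_le_two).1 hy.2
    have hy1 : 1 ≤ y := (one_le_pow_iff_of_nonneg hy0 hΔ0).1 (by linarith)
    have hC : ((Δ : ℝ) + 1) ^ 2 * 2 ^ Δ * ε ≤ C * ε := by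
      unfold C
      gcongr
      · norm_num
      · exact Nat.le_add_left _ _
    exact PackedPoly.existsUnique_pos_root hc hy0 ((le_self_pow₀ hy1 hΔ0).trans hhigh)
      (by linarith) hhigh
  · have : (1 + C * ε) ^ (1 / (Δ : ℝ)) ≤ (3 / 2 : ℝ) ^ (1 / (Δ : ℝ)) :=
      Real.rpow_le_rpow (by positivity) (by linarith) (by positivity)
    linarith
  · exact sub_pos.2 (Real.rpow_lt_rpow (by norm_num) (by norm_num) (by positivity))
end

section
/- Let Δ, D ≥ 2 be integers. There exist constants ε₀ > 0 and c₀ > 0, depending only on Δ and D, such that the following holds for every 0 < ε ≤ ε₀. Let P(X₁, …, X_D) = X₁ − X₂^Δ + Σ_m A_m X₁^{m₁}···X_D^{m_D}, where the sum ranges over multi-indices m of total degree at most Δ and 0 ≤ A_m ≤ ε. Then the set { (x₂, …, x_D) ∈ [1,2]^{D−1} : there exists x₁ ∈ [1,2] with P(x₁, x₂, …, x_D) = 0 } has (D−1)-dimensional Lebesgue measure at least c₀. -/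
open Finset MeasureTheory

def packedErr (Δ d : ℕ) (A : (Fin (d + 2) → Fin (Δ + 1)) → ℝ) (x : Fin (d + 2) → ℝ) : ℝ :=
  ∑ m : Fin (d + 2) → Fin (Δ + 1),
    if (∑ i, (m i : ℕ)) ≤ Δ then A m * ∏ i, (x i) ^ (m i : ℕ) else 0

section Packed

variable {Δ d : ℕ} {A : (Fin (d + 2) → Fin (Δ + 1)) → ℝ}

theorem packedVal_eq (x : Fin (d + 2) → ℝ) :
    packedVal Δ d A x = x 0 - x 1 ^ Δ + packedErr Δ d A x := rfl

theorem continuous_packedVal : Continuous (packedVal Δ d A) := by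
  unfold packedVal
  refine (by fun_prop : Continuous fun x : Fin (d + 2) → ℝ => x 0 - x 1 ^ Δ).add
    (continuous_finsetSum _ fun m _ => ?_)
  split_ifs
  · fun_prop
  · exact continuous_const

theorem packedErr_nonneg (hA : ∀ m, 0 ≤ A m) {x : Fin (d + 2) → ℝ} (hx : ∀ i, 0 ≤ x i) :
    0 ≤ packedErr Δ d A x :=
  sum_nonneg fun m _ => by
    split_ifs
    · exact mul_nonneg (hA m) (prod_nonneg fun i _ => pow_nonneg (hx i) _)
    · exact le_rfl

theorem prod_pow_le_pow_sum {ι : Type*} (s : Finset ι) (k : ι → ℕ) {x : ι → ℝ} {R : ℝ}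
    (hx : ∀ i ∈ s, x i ∈ Set.Icc 0 R) :
    ∏ i ∈ s, x i ^ k i ≤ R ^ ∑ i ∈ s, k i := by
  rw [← prod_pow_eq_pow_sum]
  exact prod_le_prod (fun i hi => pow_nonneg (hx i hi).1 _)
    fun i hi => pow_le_pow_left₀ (hx i hi).1 (hx i hi).2 _

theorem packedErr_le {ε : ℝ} (hε : 0 ≤ ε) (hA : ∀ m, A m ≤ ε) {x : Fin (d + 2) → ℝ}
    (hx : ∀ i, x i ∈ Set.Icc 0 2) :
    packedErr Δ d A x ≤ (Δ + 1) ^ (d + 2) * ε * 2 ^ Δ := by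
  have hterm : ∀ m : Fin (d + 2) → Fin (Δ + 1),
      (if (∑ i, (m i : ℕ)) ≤ Δ then A m * ∏ i, (x i) ^ (m i : ℕ) else 0) ≤ ε * 2 ^ Δ := by
    intro m
    split_ifs with hm
    · have hprod : ∏ i, x i ^ (m i : ℕ) ≤ 2 ^ Δ :=
        (prod_pow_le_pow_sum _ _ fun i _ => hx i).trans (pow_le_pow_right₀ one_le_two hm)
      exact mul_le_mul (hA m) hprod (prod_nonneg fun i _ => pow_nonneg (hx i).1 _) hε
    · positivity
  calc packedErr Δ d A x ≤ ∑ _m : Fin (d + 2) → Fin (Δ + 1), ε * 2 ^ Δ :=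
        sum_le_sum fun m _ => hterm m
    _ = (Δ + 1) ^ (d + 2) * ε * 2 ^ Δ := by
        simp only [sum_const, card_univ, Fintype.card_fun, Fintype.card_fin, nsmul_eq_mul]
        push_cast
        ring

theorem exists_packedVal_cons_eq_zero {ε : ℝ} (hε : 0 ≤ ε) (hA : ∀ m, 0 ≤ A m ∧ A m ≤ ε)
    {y : Fin (d + 1) → ℝ} (hy : ∀ i, y i ∈ Set.Icc 0 2)
    (hy₀ : 1 + (Δ + 1) ^ (d + 2) * ε * 2 ^ Δ ≤ y 0 ^ Δ) (hy₀' : y 0 ^ Δ ≤ 2) :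
    ∃ x₁ ∈ Set.Icc (1 : ℝ) 2, packedVal Δ d A (Fin.cons x₁ y) = 0 := by
  have hcons : ∀ x₁ ∈ Set.Icc (1 : ℝ) 2, ∀ i, (Fin.cons x₁ y : Fin (d + 2) → ℝ) i ∈ Set.Icc 0 2 :=
    fun x₁ hx₁ i => Fin.cases ⟨zero_le_one.trans hx₁.1, hx₁.2⟩ hy i
  have hval : ∀ x₁ : ℝ, packedVal Δ d A (Fin.cons x₁ y) =
      x₁ - y 0 ^ Δ + packedErr Δ d A (Fin.cons x₁ y) := fun x₁ => by
    rw [packedVal_eq, ← Fin.succ_zero_eq_one, Fin.cons_succ, Fin.cons_zero]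
  have hleft : packedVal Δ d A (Fin.cons 1 y) ≤ 0 := by
    have hmem : (1 : ℝ) ∈ Set.Icc 1 2 := ⟨le_rfl, one_le_two⟩
    rw [hval 1]
    linarith [packedErr_le hε (fun m => (hA m).2) (hcons 1 hmem)]
  have hright : 0 ≤ packedVal Δ d A (Fin.cons 2 y) := by
    have hmem : (2 : ℝ) ∈ Set.Icc 1 2 := ⟨one_le_two, le_rfl⟩
    rw [hval 2]
    linarith [packedErr_nonneg (fun m => (hA m).1) fun i => (hcons 2 hmem i).1]
  exact intermediate_value_Icc one_le_two
    ((continuous_packedVal.comp (continuous_id.finCons continuous_const)).continuousOn)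
    ⟨hleft, hright⟩

end Packed

theorem volume_pi_update_Icc {ι : Type*} [Fintype ι] [DecidableEq ι] (i : ι) (a b : ℝ) :
    volume (Set.univ.pi (Function.update (fun _ => Set.Icc (1 : ℝ) 2) i (Set.Icc a b))) =
      ENNReal.ofReal (b - a) := by
  rw [volume_pi_pi, Fintype.prod_eq_single i fun j hj => by simp [hj]; norm_num]
  simp

theorem exists_nthRoots_of_lt {n : ℕ} (hn : n ≠ 0) {s t : ℝ} (hs : 1 ≤ s) (hst : s < t)
    (ht : t ≤ 2 ^ n) : ∃ a b : ℝ, 1 ≤ a ∧ a < b ∧ b ≤ 2 ∧ a ^ n = s ∧ b ^ n = t := by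
  have ha : (s ^ (n : ℝ)⁻¹) ^ n = s := Real.rpow_inv_natCast_pow (by linarith) hn
  have hb : (t ^ (n : ℝ)⁻¹) ^ n = t := Real.rpow_inv_natCast_pow (by linarith) hn
  have ha₀ : 0 ≤ s ^ (n : ℝ)⁻¹ := Real.rpow_nonneg (by linarith) _
  have hb₀ : 0 ≤ t ^ (n : ℝ)⁻¹ := Real.rpow_nonneg (by linarith) _
  refine ⟨_, _, ?_, ?_, ?_, ha, hb⟩
  · exact (one_le_pow_iff_of_nonneg ha₀ hn).1 (by rwa [ha])
  · exact (pow_lt_pow_iff_left₀ ha₀ hb₀ hn).1 (by rwa [ha, hb])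
  · exact (pow_le_pow_iff_left₀ hb₀ zero_le_two hn).1 (by rwa [hb])

/-- Lemma `base`: in dimension `D = d+2 ≥ 2` there are constants `ε₀ > 0` and
`c₀ > 0`, depending only on `Δ` and `D`, such that for every `0 < ε ≤ ε₀` and every
packed polynomial `P` with coefficients in `[0,ε]`, the projection
`{(x₂,…,x_D) ∈ [1,2]^{D−1} : ∃ x₁ ∈ [1,2], P(x₁,x₂,…,x_D) = 0}` of the zero set of
`P` has `(D−1)`-dimensional Lebesgue measure at least `c₀`. -/
theorem statement9 (Δ d : ℕ) (hΔ : 2 ≤ Δ) :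
    ∃ ε₀ : ℝ, 0 < ε₀ ∧ ∃ c₀ : ℝ, 0 < c₀ ∧
      ∀ ε : ℝ, 0 < ε → ε ≤ ε₀ →
        ∀ A : (Fin (d + 2) → Fin (Δ + 1)) → ℝ,
          (∀ m, 0 ≤ A m ∧ A m ≤ ε) →
          ENNReal.ofReal c₀ ≤
            volume {y : Fin (d + 1) → ℝ |
              y ∈ Set.Icc (fun _ => (1 : ℝ)) (fun _ => (2 : ℝ)) ∧
              ∃ x₁ ∈ Set.Icc (1 : ℝ) 2, packedVal Δ d A (Fin.cons x₁ y) = 0} := by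
  have hΔ0 : Δ ≠ 0 := by omega
  obtain ⟨a, b, ha, hab, hb, haΔ, hbΔ⟩ := exists_nthRoots_of_lt hΔ0 (by norm_num : (1 : ℝ) ≤ 3 / 2)
    (by norm_num : (3 / 2 : ℝ) < 2) (le_self_pow₀ one_le_two hΔ0)
  set N : ℝ := (Δ + 1) ^ (d + 2) * 2 ^ Δ
  refine ⟨1 / (2 * N), by positivity, b - a, sub_pos.2 hab, fun ε hε hε₀ A hA => ?_⟩
  rw [← volume_pi_update_Icc (0 : Fin (d + 1)) a b]
  refine measure_mono fun y hy => ?_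
  have hy₀ : y 0 ∈ Set.Icc a b := by simpa using hy 0 (Set.mem_univ _)
  have hy : ∀ i, y i ∈ Set.Icc (1 : ℝ) 2 := fun i => by
    rcases eq_or_ne i 0 with rfl | hi
    · exact ⟨ha.trans hy₀.1, hy₀.2.trans hb⟩
    · simpa [hi] using hy i (Set.mem_univ _)
  have hNε : N * ε ≤ 1 / 2 := by
    rw [le_div_iff₀ (by positivity)] at hε₀
    nlinarith
  refine ⟨⟨fun i => (hy i).1, fun i => (hy i).2⟩, exists_packedVal_cons_eq_zero hε.le hA
    (fun i => ⟨zero_le_one.trans (hy i).1, (hy i).2⟩) ?_ ?_⟩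
  · calc 1 + (Δ + 1) ^ (d + 2) * ε * 2 ^ Δ ≤ a ^ Δ := by linarith
      _ ≤ y 0 ^ Δ := pow_le_pow_left₀ (zero_le_one.trans ha) hy₀.1 Δ
  · exact hbΔ ▸ pow_le_pow_left₀ (zero_le_one.trans (ha.trans hy₀.1)) hy₀.2 Δ
end

section
/- Let a < b be reals, let k ≥ 1 be an integer, and let α : ℝ → ℝ be continuously differentiable on [a,b]. Suppose that for every v ∈ ℝ the set { s ∈ [a,b] : α(s) − v ∈ 2π·ℤ } has at most k elements. Then ∫_a^b |α'(s)| ds ≤ 2π·k². -/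
open Set Real MeasureTheory Topology

/-!
If every value is taken at most `k` times, then for any partition of `[a, b]` the open
intervals between consecutive values of `α` cover each point at most `k` times (intermediate
value theorem), so the total variation of `α` is at most `k` times the length of its range.
The range is an interval which cannot contain `k + 1` points of one residue class mod `2π`,
hence has length at most `2πk`. Finally `∫ |α'|` is bounded by the total variation: with `V`
the variation function, `V + α` and `V - α` are monotone, so
`|α'| ≤ ((V + α)' + (V - α)') / 2` almost everywhere, and the derivative of a monotone
function integrates to at most its increment.
-/

theorem intermediate_value_uIoo {f : ℝ → ℝ} {a b : ℝ} (hab : a ≤ b)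
    (hf : ContinuousOn f (Icc a b)) : uIoo (f a) (f b) ⊆ f '' Ioo a b := by
  rw [uIoo_eq_union]
  exact union_subset (intermediate_value_Ioo hab hf) (intermediate_value_Ioo' hab hf)

open scoped Classical in
theorem ContinuousOn.card_filter_mem_uIoo_le_encard {f : ℝ → ℝ} {s : Set ℝ}
    (hf : ContinuousOn f s) (hs : s.OrdConnected) {u : ℕ → ℝ} (hu : Monotone u)
    (hus : ∀ i, u i ∈ s) (n : ℕ) (y : ℝ) :
    (((Finset.range n).filter fun i => y ∈ uIoo (f (u i)) (f (u (i + 1)))).card : ℕ∞) ≤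
      {x ∈ s | f x = y}.encard := by
  set T := (Finset.range n).filter fun i => y ∈ uIoo (f (u i)) (f (u (i + 1)))
  have hcross : ∀ i ∈ T, ∃ x ∈ Ioo (u i) (u (i + 1)), f x = y := fun i hi =>
    intermediate_value_uIoo (hu i.le_succ)
      (hf.mono (hs.out (hus i) (hus (i + 1)))) (Finset.mem_filter.mp hi).2
  choose! σ hσ hσy using hcross
  rw [← encard_coe_eq_coe_finsetCard]
  refine encard_le_encard_of_injOn (fun i hi => ⟨hs.out (hus i) (hus (i + 1))
    (Ioo_subset_Icc_self (hσ i hi)), hσy i hi⟩) ?_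
  have hlt : ∀ i ∈ T, ∀ j ∈ T, i < j → σ i < σ j := fun i hi j hj hij =>
    (hσ i hi).2.trans_le ((hu hij).trans (hσ j hj).1.le)
  intro i hi j hj hσij
  by_contra hne
  rcases lt_or_gt_of_ne hne with h | h
  · exact (hlt i hi j hj h).ne hσij
  · exact (hlt j hj i hi h).ne' hσij

theorem ContinuousOn.eVariationOn_le_mul_volume_image {f : ℝ → ℝ} {s : Set ℝ}
    (hf : ContinuousOn f s) (hs : s.OrdConnected) {k : ℕ}
    (hfib : ∀ y, {x ∈ s | f x = y}.encard ≤ k) :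
    eVariationOn f s ≤ k * volume (f '' s) := by
  classical
  refine iSup_le fun ⟨n, u, hu, hus⟩ => ?_
  have hpt : ∀ y, ∑ i ∈ Finset.range n, (uIoo (f (u i)) (f (u (i + 1)))).indicator 1 y ≤
      (k : ENNReal) * (f '' s).indicator 1 y := by
    intro y
    have hcard := hf.card_filter_mem_uIoo_le_encard hs hu hus n y
    simp only [indicator_apply, Pi.one_apply, Finset.sum_boole]
    split_ifs with hy
    · rw [mul_one]
      exact_mod_cast hcard.trans (hfib y)
    · have hempty : {x ∈ s | f x = y} = ∅ :=
        eq_empty_of_forall_notMem fun x hx => hy ⟨x, hx⟩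
      rw [hempty, encard_empty, nonpos_iff_eq_zero, Nat.cast_eq_zero] at hcard
      simp [hcard]
  calc ∑ i ∈ Finset.range n, edist (f (u (i + 1))) (f (u i))
      = ∑ i ∈ Finset.range n, volume (uIoo (f (u i)) (f (u (i + 1)))) := by
        simp only [edist_dist, Real.dist_eq, Real.volume_uIoo]
    _ = ∫⁻ y, ∑ i ∈ Finset.range n, (uIoo (f (u i)) (f (u (i + 1)))).indicator 1 y := by
        have hmeas : ∀ i, MeasurableSet (uIoo (f (u i)) (f (u (i + 1)))) :=
          fun _ => measurableSet_Ioo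
        rw [lintegral_finsetSum _ fun i _ => measurable_one.indicator (hmeas i)]
        simp only [lintegral_indicator_one (hmeas _)]
    _ ≤ ∫⁻ y, (k : ENNReal) * (f '' s).indicator 1 y := lintegral_mono hpt
    _ ≤ k * volume (f '' s) := by
        rw [lintegral_const_mul' _ _ (ENNReal.natCast_ne_top k)]
        gcongr
        exact lintegral_indicator_one_le _

theorem BoundedVariationOn.intervalIntegral_abs_deriv_le {f : ℝ → ℝ} {a b : ℝ}
    (hab : a ≤ b) (hf : BoundedVariationOn f (Icc a b)) :
    ∫ x in a..b, |deriv f x| ≤ (eVariationOn f (Icc a b)).toReal := by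
  set V := variationOnFromTo f (Icc a b) a
  have ha : a ∈ Icc a b := left_mem_Icc.2 hab
  have hP : MonotoneOn (V + f) (Icc a b) :=
    variationOnFromTo.add_self_monotoneOn hf.locallyBoundedVariationOn ha
  have hQ : MonotoneOn (V - f) (Icc a b) :=
    variationOnFromTo.sub_self_monotoneOn hf.locallyBoundedVariationOn ha
  have hPu : MonotoneOn (V + f) (uIcc a b) := by rwa [uIcc_of_le hab]
  have hQu : MonotoneOn (V - f) (uIcc a b) := by rwa [uIcc_of_le hab]
  have hPi := hPu.intervalIntegrable_deriv
  have hQi := hQu.intervalIntegrable_deriv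
  have hP' := hPu.intervalIntegral_deriv_mem_uIcc
  have hQ' := hQu.intervalIntegral_deriv_mem_uIcc
  rw [uIcc_of_le (sub_nonneg.2 (hP ha (right_mem_Icc.2 hab) hab))] at hP'
  rw [uIcc_of_le (sub_nonneg.2 (hQ ha (right_mem_Icc.2 hab) hab))] at hQ'
  have hpt : ∀ x ∈ Ioo a b, DifferentiableWithinAt ℝ (V + f) (Icc a b) x →
      DifferentiableWithinAt ℝ (V - f) (Icc a b) x →
      |deriv f x| ≤ (deriv (V + f) x + deriv (V - f) x) / 2 := by
    intro x hx hPx hQx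
    have hnhds : Icc a b ∈ 𝓝 x := Icc_mem_nhds hx.1 hx.2
    have hP0 : 0 ≤ deriv (V + f) x := by
      rw [← derivWithin_of_mem_nhds hnhds]; exact hP.derivWithin_nonneg
    have hQ0 : 0 ≤ deriv (V - f) x := by
      rw [← derivWithin_of_mem_nhds hnhds]; exact hQ.derivWithin_nonneg
    have hfx : HasDerivAt f ((deriv (V + f) x - deriv (V - f) x) / 2) x := by
      refine (((hPx.differentiableAt hnhds).hasDerivAt.sub
        (hQx.differentiableAt hnhds).hasDerivAt).div_const 2).congr_of_eventuallyEq
        (Filter.Eventually.of_forall fun y => ?_)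
      simp only [Pi.add_apply, Pi.sub_apply]
      ring
    rw [hfx.deriv, abs_le]
    constructor <;> linarith
  have hmono :
      ∫ x in a..b, |deriv f x| ≤ ∫ x in a..b, (deriv (V + f) x + deriv (V - f) x) / 2 := by
    rw [intervalIntegral.integral_of_le hab, intervalIntegral.integral_of_le hab,
      integral_Ioc_eq_integral_Ioo, integral_Ioc_eq_integral_Ioo]
    refine integral_mono_of_nonneg (ae_of_all _ fun x => abs_nonneg _)
      (((hPi.add hQi).div_const 2).1.mono_set Ioo_subset_Ioc_self) ?_
    rw [Filter.EventuallyLE, ae_restrict_iff' measurableSet_Ioo]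
    filter_upwards [hP.ae_differentiableWithinAt_of_mem, hQ.ae_differentiableWithinAt_of_mem]
      with x hPx hQx hx
    exact hpt x hx (hPx (Ioo_subset_Icc_self hx)) (hQx (Ioo_subset_Icc_self hx))
  have hVb : V b = (eVariationOn f (Icc a b)).toReal := by
    rw [show V b = _ from variationOnFromTo.eq_of_le _ _ hab, inter_self]
  have hVa : V a = 0 := variationOnFromTo.self _ _ _
  rw [intervalIntegral.integral_div, intervalIntegral.integral_add hPi hQi] at hmono
  simp only [Pi.add_apply, Pi.sub_apply] at hP' hQ'
  linarith [hP'.2, hQ'.2]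

theorem sub_le_mul_of_Icc_subset_image {f : ℝ → ℝ} {s : Set ℝ} {p m M : ℝ} {k : ℕ}
    (hp : 0 < p) (hres : ∀ v, {x ∈ s | ∃ n : ℤ, f x - v = p * n}.encard ≤ k)
    (hI : Icc m M ⊆ f '' s) : M - m ≤ p * k := by
  by_contra! hlt
  set S := {x ∈ s | ∃ n : ℤ, f x - m = p * n}
  have hsub : (fun j : ℕ => m + p * j) '' ↑(Finset.range (k + 1)) ⊆ f '' S := by
    rintro _ ⟨j, hj, rfl⟩
    have hjk : p * j ≤ p * k := by
      gcongr; exact_mod_cast Nat.lt_succ_iff.mp (Finset.mem_range.mp hj)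
    have hj0 : 0 ≤ p * j := by positivity
    obtain ⟨x, hx, hfx⟩ := hI (show m + p * j ∈ Icc m M from ⟨by linarith, by linarith⟩)
    exact ⟨x, ⟨hx, j, by rw [hfx]; push_cast; ring⟩, hfx⟩
  have hinj : InjOn (fun j : ℕ => m + p * j) ↑(Finset.range (k + 1)) := fun i _ j _ h => by
    simpa [hp.ne'] using h
  have hcard := (encard_le_encard hsub).trans ((encard_image_le f S).trans (hres m))
  rw [hinj.encard_image, encard_coe_eq_coe_finsetCard, Finset.card_range] at hcard
  exact absurd hcard (by norm_cast; omega)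

theorem ContinuousOn.volume_image_Icc_le_of_encard_le {f : ℝ → ℝ} {a b p : ℝ} {k : ℕ}
    (hab : a ≤ b) (hf : ContinuousOn f (Icc a b)) (hp : 0 < p)
    (hres : ∀ v, {x ∈ Icc a b | ∃ n : ℤ, f x - v = p * n}.encard ≤ k) :
    volume (f '' Icc a b) ≤ ENNReal.ofReal (p * k) := by
  rw [hf.image_Icc hab, Real.volume_Icc]
  exact ENNReal.ofReal_le_ofReal
    (sub_le_mul_of_Icc_subset_image hp hres (hf.image_Icc hab).symm.subset)

theorem statement11_general (a b : ℝ) (hab : a < b) (k : ℕ)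
    (α : ℝ → ℝ) (hα : ContDiffOn ℝ 1 α (Set.Icc a b))
    (hcount : ∀ v : ℝ,
      {s ∈ Set.Icc a b | ∃ m : ℤ, α s - v = 2 * Real.pi * (m : ℝ)}.Finite ∧
      {s ∈ Set.Icc a b | ∃ m : ℤ, α s - v = 2 * Real.pi * (m : ℝ)}.ncard ≤ k) :
    ∫ s in a..b, |derivWithin α (Set.Icc a b) s| ≤ 2 * Real.pi * (k : ℝ) ^ 2 := by
  have hαc : ContinuousOn α (Icc a b) := hα.continuousOn
  have hres : ∀ v, {s ∈ Icc a b | ∃ m : ℤ, α s - v = 2 * π * m}.encard ≤ k := by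
    intro v
    rw [← (hcount v).1.cast_ncard_eq]
    exact_mod_cast (hcount v).2
  have hfib : ∀ v, {s ∈ Icc a b | α s = v}.encard ≤ k := fun v =>
    (hres v).trans' (encard_le_encard fun s ⟨hs, hv⟩ => ⟨hs, 0, by simp [hv]⟩)
  have hvar : eVariationOn α (Icc a b) ≤ ENNReal.ofReal (2 * π * k ^ 2) := calc
    eVariationOn α (Icc a b) ≤ k * volume (α '' Icc a b) :=
      hαc.eVariationOn_le_mul_volume_image ordConnected_Icc hfib
    _ ≤ k * ENNReal.ofReal (2 * π * k) := by
      gcongr; exact hαc.volume_image_Icc_le_of_encard_le hab.le two_pi_pos hres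
    _ = ENNReal.ofReal (2 * π * k ^ 2) := by
      rw [← ENNReal.ofReal_natCast, ← ENNReal.ofReal_mul (by positivity)]; ring_nf
  calc ∫ s in a..b, |derivWithin α (Icc a b) s| = ∫ s in a..b, |deriv α s| := by
        simp only [intervalIntegral.integral_of_le hab.le, integral_Ioc_eq_integral_Ioo]
        exact setIntegral_congr_fun measurableSet_Ioo fun x hx => by
          rw [derivWithin_of_mem_nhds (Icc_mem_nhds hx.1 hx.2)]
    _ ≤ (eVariationOn α (Icc a b)).toReal :=
      BoundedVariationOn.intervalIntegral_abs_deriv_le hab.le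
        (ne_top_of_le_ne_top ENNReal.ofReal_ne_top hvar)
    _ ≤ 2 * π * k ^ 2 := ENNReal.toReal_le_of_le_ofReal (by positivity) hvar

/-- Lemma `anglebound`: if `α` is the (continuously differentiable) angle function of
a curve parametrized by arc length on `[a,b]`, and every tangent direction (residue
class of the angle modulo `2π`) is attained at most `k` times, then the total
absolute curvature `∫_a^b |α'(s)| ds` is at most `2π·k²`. -/
theorem statement11 (a b : ℝ) (hab : a < b) (k : ℕ) (hk : 1 ≤ k)
    (α : ℝ → ℝ) (hα : ContDiffOn ℝ 1 α (Set.Icc a b))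
    (hcount : ∀ v : ℝ,
      {s ∈ Set.Icc a b | ∃ m : ℤ, α s - v = 2 * Real.pi * (m : ℝ)}.Finite ∧
      {s ∈ Set.Icc a b | ∃ m : ℤ, α s - v = 2 * Real.pi * (m : ℝ)}.ncard ≤ k) :
    ∫ s in a..b, |derivWithin α (Set.Icc a b) s| ≤ 2 * Real.pi * (k : ℝ) ^ 2 :=
  statement11_general a b hab k α hα hcount
end
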